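/- arXiv:1902.07109 — 10 statements merged into one kernel-verified Lean document; each statement's English description precedes it below -/
import Mathlib

section
/- Let m, n be positive integers with n ≤ m. Then 𝒮_m(n) is full if and only if m·n ≤ (n+2)². In particular, 𝒮_m(n) is full whenever n ≤ m ≤ 8. -/
/-!
Since `x ≤ x²` for every integer `x`, each `T ∈ 𝒮_m(n)` satisfies `T ≤ n`. Hence `n + 2`, which
has the parity of `n`, is missing from `𝒮_m(n)`, and it lies in `𝒯_m(n)` exactly when
`(n + 2)² < mn`. Conversely, when `mn ≤ (n + 2)²` every `T ∈ 𝒯_m(n)` has `|T| ≤ n`, so it is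
`a - b` with `a + b = n ≤ m`, realised by `a` ones, `b` minus ones and zeros.
-/

/-- `S m n` is the set of integers `T` such that there exist integers
`x₁,…,x_m` with `x₁+⋯+x_m = T` and `x₁²+⋯+x_m² = n`. -/
def S (m n : ℕ) : Set ℤ :=
  {T : ℤ | ∃ x : Fin m → ℤ, (∑ i, x i) = T ∧ (∑ i, (x i) ^ 2) = (n : ℤ)}

/-- `sos m` is the set of integers expressible as a sum of `m` squares of integers. -/
def sos (m : ℕ) : Set ℤ :=
  {n : ℤ | ∃ a : Fin m → ℤ, (∑ i, (a i) ^ 2) = n}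

/-- The binary quadratic form `aX² + 2hXY + bY²` is a sum of `m` squares of
integral linear forms. -/
def IsSumSqLin (m : ℕ) (a h b : ℤ) : Prop :=
  ∃ α β : Fin m → ℤ,
    (∑ i, (α i) ^ 2) = a ∧ (∑ i, α i * β i) = h ∧ (∑ i, (β i) ^ 2) = b

/-- `S m n` is full: every `T` with `T ≡ n (mod 2)` and `T² < mn` lies in `S m n`. -/
def Sfull (m n : ℕ) : Prop :=
  ∀ T : ℤ, T % 2 = (n : ℤ) % 2 → T ^ 2 < (m : ℤ) * n → T ∈ S m n

theorem sub_mem_S (a b r : ℕ) : (a - b : ℤ) ∈ S (a + b + r) (a + b) :=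
  ⟨Fin.append (Fin.append (fun _ => 1) (fun _ => -1)) (fun _ => 0),
    by simp [Fin.sum_univ_add, sub_eq_add_neg], by simp [Fin.sum_univ_add]⟩

theorem sub_mem_S_of_add_le {m a b : ℕ} (h : a + b ≤ m) : (a - b : ℤ) ∈ S m (a + b) := by
  obtain ⟨r, rfl⟩ := Nat.exists_eq_add_of_le h
  exact sub_mem_S a b r

theorem mem_S_of_abs_le {m n : ℕ} {T : ℤ} (hnm : n ≤ m) (hT : |T| ≤ n)
    (hpar : T % 2 = (n : ℤ) % 2) : T ∈ S m n := by
  rw [abs_le] at hT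
  obtain ⟨a, ha⟩ : ∃ a : ℕ, (a : ℤ) = (n + T) / 2 := ⟨_, Int.toNat_of_nonneg (by omega)⟩
  obtain ⟨b, hb⟩ : ∃ b : ℕ, (b : ℤ) = (n - T) / 2 := ⟨_, Int.toNat_of_nonneg (by omega)⟩
  have hab : a + b = n := by omega
  subst hab
  convert sub_mem_S_of_add_le hnm using 1
  omega

theorem le_of_mem_S {m n : ℕ} {T : ℤ} (hT : T ∈ S m n) : T ≤ n := by
  obtain ⟨x, rfl, hx⟩ := hT
  rw [← hx]
  exact Finset.sum_le_sum fun i _ => Int.le_self_sq (x i)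

theorem Sfull_of_mul_le {m n : ℕ} (hnm : n ≤ m) (h : m * n ≤ (n + 2) ^ 2) : Sfull m n := by
  intro T hpar hT
  have hT_sq : T ^ 2 < ((n : ℤ) + 2) ^ 2 := hT.trans_le (by exact_mod_cast h)
  have hT_abs : |T| < n + 2 := abs_lt_of_sq_lt_sq hT_sq (by positivity)
  exact mem_S_of_abs_le hnm (by rw [abs_lt] at hT_abs; rw [abs_le]; omega) hpar

theorem mul_le_of_Sfull {m n : ℕ} (h : Sfull m n) : m * n ≤ (n + 2) ^ 2 := by
  by_contra! hlt
  have := le_of_mem_S (h (n + 2) (by omega) (by exact_mod_cast hlt))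
  omega

theorem mul_le_add_two_sq {m : ℕ} (n : ℕ) (hm : m ≤ 8) : m * n ≤ (n + 2) ^ 2 :=
  calc m * n ≤ 8 * n := Nat.mul_le_mul_right n hm
    _ ≤ (n + 2) ^ 2 := by nlinarith [sq_nonneg ((n : ℤ) - 2)]

theorem stmt2_general (m n : ℕ) (hnm : n ≤ m) :
    (Sfull m n ↔ m * n ≤ (n + 2) ^ 2) ∧ (m ≤ 8 → Sfull m n) :=
  ⟨⟨mul_le_of_Sfull, Sfull_of_mul_le hnm⟩, fun hm => Sfull_of_mul_le hnm (mul_le_add_two_sq n hm)⟩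

theorem stmt2 (m n : ℕ) (hm : 0 < m) (hn : 0 < n) (hnm : n ≤ m) :
    (Sfull m n ↔ m * n ≤ (n + 2) ^ 2) ∧ (m ≤ 8 → Sfull m n) :=
  stmt2_general m n hnm
end

section
/- Let m be an integer with 4 ≤ m ≤ 7, let n be a positive integer and T an integer. Then T ∈ 𝒮_m(n) if and only if T ≡ n (mod 2) and the binary quadratic form mX² + 2TXY + nY² is a sum of m squares of integral linear forms. -/
lemma zmod2_sq (a : ZMod 2) : a ^ 2 = a := by revert a; decide

theorem stmt4 (m : ℕ) (hm : 4 ≤ m) (hm' : m ≤ 7) (n : ℕ) (hn : 0 < n) (T : ℤ) :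
    T ∈ S m n ↔ (T % 2 = (n : ℤ) % 2 ∧ IsSumSqLin m (m : ℤ) T (n : ℤ)) := by
  constructor
  · rintro ⟨x, hsum, hsq⟩
    have hpar : T % 2 = (n : ℤ) % 2 := by
      have h1 : ((T : ZMod 2)) = (((n:ℤ) : ZMod 2)) := by
        rw [← hsum, ← hsq]
        push_cast
        exact Finset.sum_congr rfl fun i _ => (zmod2_sq _).symm
      exact (ZMod.intCast_eq_intCast_iff _ _ _).mp h1
    refine ⟨hpar, fun _ => 1, x, by simp, by simpa using hsum, hsq⟩
  · rintro ⟨hpar, α, β, hα, hT, hn'⟩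
    have hm7 : ((m : ℤ)) ≤ 7 := by exact_mod_cast hm'
    have hclass : ∀ i, α i = -2 ∨ α i = -1 ∨ α i = 0 ∨ α i = 1 ∨ α i = 2 := by
      intro i
      have h1 : α i ^ 2 ≤ (m : ℤ) := by
        rw [← hα]
        exact Finset.single_le_sum (fun j _ => sq_nonneg (α j)) (Finset.mem_univ i)
      have h2 : α i ^ 2 ≤ 7 := le_trans h1 hm7
      have hlb : -2 ≤ α i := by nlinarith
      have hub : α i ≤ 2 := by nlinarith
      omega
    -- counting
    set A := Finset.univ.filter (fun i => α i ^ 2 = 4) with hAdef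
    set A' := Finset.univ.filter (fun i => ¬ (α i ^ 2 = 4)) with hA'def
    set O := A'.filter (fun i => α i ^ 2 = 1) with hOdef
    set Z := A'.filter (fun i => ¬ (α i ^ 2 = 1)) with hZdef
    have hZ0 : ∀ i ∈ Z, α i = 0 := by
      intro i hi
      simp only [hZdef, hA'def, Finset.mem_filter] at hi
      rcases hclass i with h|h|h|h|h <;> simp [h] at hi ⊢ <;> tauto
    have hsum1 : (m : ℤ) = 4 * A.card + O.card := by
      rw [← hα, ← Finset.sum_filter_add_sum_filter_not Finset.univ (fun i => α i ^ 2 = 4) (fun i => α i ^ 2),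
          ← Finset.sum_filter_add_sum_filter_not A' (fun i => α i ^ 2 = 1) (fun i => α i ^ 2)]
      have e1 : ∑ i ∈ A, α i ^ 2 = 4 * A.card := by
        rw [Finset.sum_congr rfl (fun i hi => (Finset.mem_filter.mp hi).2)]
        simp [mul_comm]; rfl
      have e2 : ∑ i ∈ O, α i ^ 2 = O.card := by
        rw [Finset.sum_congr rfl (fun i hi => (Finset.mem_filter.mp hi).2)]
        rw [Finset.sum_const, nsmul_eq_mul, mul_one]
      have e3 : ∑ i ∈ Z, α i ^ 2 = 0 := by
        rw [Finset.sum_congr rfl (fun i hi => by rw [hZ0 i hi])]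
        simp
      rw [e1, e2, e3]; ring
    have hcard1 : A.card + A'.card = m := by
      rw [hAdef, hA'def]
      rw [Finset.card_filter_add_card_filter_not]
      simp
    have hcard2 : O.card + Z.card = A'.card := by
      rw [hOdef, hZdef, Finset.card_filter_add_card_filter_not]
    have hA01 : A.card = 0 ∨ A.card = 1 := by omega
    have hZcard : Z.card = 3 * A.card := by omega
    rcases hA01 with hA0 | hA1
    · -- all α i = ±1
      have hone : ∀ i, α i ^ 2 = 1 := by
        intro i
        by_contra hne
        have h4 : ¬ (α i ^ 2 = 4) := by
          intro h4
          have : i ∈ A := by simp [hAdef, h4]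
          rw [Finset.card_eq_zero.mp hA0] at this
          simp at this
        have : i ∈ Z := by
          simp only [hZdef, hA'def, Finset.mem_filter, Finset.mem_univ, true_and]
          exact ⟨h4, hne⟩
        rw [Finset.card_eq_zero.mp (by omega : Z.card = 0)] at this
        simp at this
      refine ⟨fun i => α i * β i, hT, ?_⟩
      rw [← hn']
      exact Finset.sum_congr rfl fun i _ => by rw [mul_pow, hone i, one_mul]
    · -- one α = ±2, three zeros
      obtain ⟨j, hAj⟩ := Finset.card_eq_one.mp hA1
      obtain ⟨k₁, k₂, k₃, h12, h13, h23, hZeq⟩ := Finset.card_eq_three.mp (by omega : Z.card = 3)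
      have hj4 : α j ^ 2 = 4 := by
        have : j ∈ A := by rw [hAj]; simp
        simpa [hAdef] using this
      have hk1 : α k₁ = 0 := hZ0 k₁ (by rw [hZeq]; simp)
      have hk2 : α k₂ = 0 := hZ0 k₂ (by rw [hZeq]; simp)
      have hk3 : α k₃ = 0 := hZ0 k₃ (by rw [hZeq]; simp)
      have hjk1 : j ≠ k₁ := by intro h; rw [h, hk1] at hj4; norm_num at hj4
      have hjk2 : j ≠ k₂ := by intro h; rw [h, hk2] at hj4; norm_num at hj4
      have hjk3 : j ≠ k₃ := by intro h; rw [h, hk3] at hj4; norm_num at hj4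
      set s : Finset (Fin m) := {j, k₁, k₂, k₃} with hsdef
      set u : Finset (Fin m) := Finset.univ \ s with hudef
      have hone : ∀ i ∈ u, α i ^ 2 = 1 := by
        intro i hi
        simp only [hudef, hsdef, Finset.mem_sdiff, Finset.mem_univ, true_and,
          Finset.mem_insert, Finset.mem_singleton] at hi
        push_neg at hi
        obtain ⟨hij, hik1, hik2, hik3⟩ := hi
        by_contra hne
        have h4 : ¬ (α i ^ 2 = 4) := by
          intro h4
          have : i ∈ A := by simp [hAdef, h4]
          rw [hAj] at this
          simp at this
          exact hij this
        have : i ∈ Z := by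
          simp only [hZdef, hA'def, Finset.mem_filter, Finset.mem_univ, true_and]
          exact ⟨h4, hne⟩
        rw [hZeq] at this
        simp at this
        tauto
      have hsplit : ∀ {M : Type} [AddCommMonoid M] (f : Fin m → M),
          ∑ i, f i = (∑ i ∈ u, f i) + (f j + f k₁ + f k₂ + f k₃) := by
        intro M _ f
        rw [← Finset.sum_sdiff (Finset.subset_univ s), ← hudef]
        congr 1
        rw [hsdef]
        rw [Finset.sum_insert (by simp [hjk1, hjk2, hjk3]),
            Finset.sum_insert (by simp [h12, h13]),
            Finset.sum_insert (by simp [h23]), Finset.sum_singleton]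
        abel
      have hj2 : α j = 2 ∨ α j = -2 := by
        rcases hclass j with h|h|h|h|h <;> rw [h] at hj4 <;> first | tauto | norm_num at hj4
      obtain ⟨p, hp1, hp2⟩ : ∃ p : ℤ, α j * β j = 2 * p ∧ p ^ 2 = β j ^ 2 := by
        rcases hj2 with h | h
        · exact ⟨β j, by rw [h], rfl⟩
        · exact ⟨-β j, by rw [h]; ring, by ring⟩
      -- parity: p + β k₁ + β k₂ + β k₃ is even
      obtain ⟨c, hc⟩ : ∃ c : ℤ, p + β k₁ + β k₂ + β k₃ = 2 * c := by
        have hTn : ((T : ZMod 2)) = (((n:ℤ) : ZMod 2)) :=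
          (ZMod.intCast_eq_intCast_iff _ _ _).mpr hpar
        have e1 : ((T : ZMod 2)) = ∑ i ∈ u, ((β i : ZMod 2)) := by
          rw [← hT]
          push_cast
          rw [hsplit (fun i => ((α i : ZMod 2)) * ((β i : ZMod 2)))]
          have hz : ∀ i ∈ u, ((α i : ZMod 2)) * ((β i : ZMod 2)) = ((β i : ZMod 2)) := by
            intro i hi
            have h1 : ((α i : ZMod 2)) ^ 2 = 1 := by
              have := congrArg (Int.cast : ℤ → ZMod 2) (hone i hi)
              push_cast at this
              exact this
            rw [zmod2_sq] at h1
            rw [h1, one_mul]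
          rw [Finset.sum_congr rfl hz]
          have hj0 : ((α j : ZMod 2)) * ((β j : ZMod 2)) = 0 := by
            have := congrArg (Int.cast : ℤ → ZMod 2) hp1
            push_cast at this
            rw [this]
            rw [show ((2 : ZMod 2)) = 0 by decide, zero_mul]
          rw [hj0, hk1, hk2, hk3]
          push_cast
          ring
        have e2 : (((n:ℤ) : ZMod 2)) = (∑ i ∈ u, ((β i : ZMod 2))) +
            (((β j : ZMod 2)) + ((β k₁ : ZMod 2)) + ((β k₂ : ZMod 2)) + ((β k₃ : ZMod 2))) := by
          rw [← hn']
          push_cast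
          rw [hsplit (fun i => ((β i : ZMod 2)) ^ 2)]
          simp only [zmod2_sq]
        have e3 : ((β j : ZMod 2)) + ((β k₁ : ZMod 2)) + ((β k₂ : ZMod 2)) + ((β k₃ : ZMod 2)) = 0 := by
          rw [hTn, e2] at e1
          linear_combination e1
        have e4 : (((p + β k₁ + β k₂ + β k₃ : ℤ)) : ZMod 2) = 0 := by
          push_cast
          have hpj : ((p : ZMod 2)) = ((β j : ZMod 2)) := by
            have := congrArg (Int.cast : ℤ → ZMod 2) hp2
            push_cast at this
            rw [zmod2_sq, zmod2_sq] at this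
            exact this
          rw [hpj]
          linear_combination e3
        have := (ZMod.intCast_zmod_eq_zero_iff_dvd _ 2).mp e4
        obtain ⟨c, hc⟩ := this
        exact ⟨c, hc⟩
      -- construct x
      refine ⟨fun i => if i = j then c - β k₁ - β k₂ - β k₃
        else if i = k₁ then c - β k₂ else if i = k₂ then c - β k₃
        else if i = k₃ then c - β k₁ else α i * β i, ?_, ?_⟩
      · rw [hsplit]
        rw [hsplit (fun i => α i * β i)] at hT
        have hu : ∀ i ∈ u, (if i = j then c - β k₁ - β k₂ - β k₃
            else if i = k₁ then c - β k₂ else if i = k₂ then c - β k₃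
            else if i = k₃ then c - β k₁ else α i * β i) = α i * β i := by
          intro i hi
          simp only [hudef, hsdef, Finset.mem_sdiff, Finset.mem_univ, true_and,
            Finset.mem_insert, Finset.mem_singleton] at hi
          push_neg at hi
          simp [hi.1, hi.2.1, hi.2.2.1, hi.2.2.2]
        rw [Finset.sum_congr rfl hu]
        simp only [eq_self_iff_true, if_true, if_neg (Ne.symm hjk1), if_neg (Ne.symm hjk2),
          if_neg (Ne.symm hjk3), if_neg (Ne.symm h12), if_neg (Ne.symm h13), if_neg (Ne.symm h23)]
        rw [hp1, hk1, hk2, hk3] at hT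
        linarith [hT]
      · rw [hsplit (fun i => _ ^ 2)]
        rw [hsplit (fun i => β i ^ 2)] at hn'
        have hu : ∀ i ∈ u, (if i = j then c - β k₁ - β k₂ - β k₃
            else if i = k₁ then c - β k₂ else if i = k₂ then c - β k₃
            else if i = k₃ then c - β k₁ else α i * β i) ^ 2 = β i ^ 2 := by
          intro i hi
          simp only [hudef, hsdef, Finset.mem_sdiff, Finset.mem_univ, true_and,
            Finset.mem_insert, Finset.mem_singleton] at hi
          push_neg at hi
          simp only [if_neg hi.1, if_neg hi.2.1, if_neg hi.2.2.1, if_neg hi.2.2.2]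
          rw [mul_pow, hone i (by simp [hudef, hsdef]; push_neg; exact hi), one_mul]
        rw [Finset.sum_congr rfl hu]
        simp only [eq_self_iff_true, if_true, if_neg (Ne.symm hjk1), if_neg (Ne.symm hjk2),
          if_neg (Ne.symm hjk3), if_neg (Ne.symm h12), if_neg (Ne.symm h13), if_neg (Ne.symm h23)]
        rw [← hn']
        have key : (c - β k₁ - β k₂ - β k₃) ^ 2 + (c - β k₂) ^ 2 + (c - β k₃) ^ 2 +
            (c - β k₁) ^ 2 = β j ^ 2 + β k₁ ^ 2 + β k₂ ^ 2 + β k₃ ^ 2 := by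
          have hp' : p = 2 * c - β k₁ - β k₂ - β k₃ := by linarith
          rw [← hp2, hp']
          ring
        linarith [key]
end

section
/- Let a, h, b be integers with a > 0, b ≥ 0 and ab − h² = 0, and let m be a positive integer. Then the binary quadratic form aX² + 2hXY + bY² is a sum of m squares of integral linear forms if and only if a ∈ sos(m). Moreover, in that case there exist integers r, s, t with t > 0, t ∈ sos(m), a = t·r², b = t·s² and h = t·r·s or h = −t·r·s. -/
private lemma sum_sq_combo (m : ℕ) (c p : ℤ) (x r : Fin m → ℤ) :
    ∑ i, (x i * c - 2 * p * r i) ^ 2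
      = c ^ 2 * (∑ i, x i ^ 2) - 4 * p * c * (∑ i, x i * r i) + 4 * p ^ 2 * (∑ i, r i ^ 2) := by
  rw [Finset.mul_sum, Finset.mul_sum, Finset.mul_sum, ← Finset.sum_sub_distrib,
    ← Finset.sum_add_distrib]
  exact Finset.sum_congr rfl fun i _ => by ring

private lemma sum_sq_expand (m : ℕ) (D : ℤ) (x w : Fin m → ℤ) :
    ∑ i, (x i - D * w i) ^ 2
      = (∑ i, x i ^ 2) - 2 * D * (∑ i, x i * w i) + D ^ 2 * (∑ i, w i ^ 2) := by
  rw [Finset.mul_sum, Finset.mul_sum, ← Finset.sum_sub_distrib, ← Finset.sum_add_distrib]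
  exact Finset.sum_congr rfl fun i _ => by ring

private lemma sum_sq_xr (m : ℕ) (D : ℤ) (x w : Fin m → ℤ) :
    ∑ i, x i * (x i - D * w i)
      = (∑ i, x i ^ 2) - D * (∑ i, x i * w i) := by
  rw [Finset.mul_sum, ← Finset.sum_sub_distrib]
  exact Finset.sum_congr rfl fun i _ => by ring

private lemma sum_smul_sq (m : ℕ) (c : ℤ) (γ : Fin m → ℤ) :
    ∑ i, (c * γ i) ^ 2 = c ^ 2 * ∑ i, γ i ^ 2 := by
  rw [Finset.mul_sum]
  exact Finset.sum_congr rfl fun i _ => by ring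

private lemma sum_smul_mul (m : ℕ) (c e : ℤ) (γ : Fin m → ℤ) :
    ∑ i, (c * γ i) * (e * γ i) = c * e * ∑ i, γ i ^ 2 := by
  rw [Finset.mul_sum]
  exact Finset.sum_congr rfl fun i _ => by ring

/-- Davenport–Cassels style descent for sums of at most 3 squares. -/
private lemma sos_descent (m : ℕ) (hm3 : m ≤ 3) :
    ∀ d : ℕ, 0 < d → ∀ N : ℤ, (∃ x : Fin m → ℤ, ∑ i, x i ^ 2 = (d : ℤ) ^ 2 * N) →
      ∃ y : Fin m → ℤ, ∑ i, y i ^ 2 = N := by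
  intro d
  induction d using Nat.strong_induction_on with
  | _ d ih =>
    intro hd N hx
    obtain ⟨x, hx⟩ := hx
    rcases eq_or_lt_of_le (Nat.one_le_iff_ne_zero.mpr hd.ne') with h1 | h2
    · exact ⟨x, by rw [hx, ← h1]; ring⟩
    · -- d ≥ 2
      set D : ℤ := (d : ℤ) with hDdef
      have hD0 : 0 < D := by rw [hDdef]; exact_mod_cast hd
      have hD2 : (2 : ℤ) ≤ D := by rw [hDdef]; exact_mod_cast h2
      set w : Fin m → ℤ := fun i => (2 * x i + D) / (2 * D) with hwdef
      set r : Fin m → ℤ := fun i => x i - D * w i with hrdef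
      have hrbound : ∀ i, 4 * r i ^ 2 ≤ D ^ 2 := by
        intro i
        have h0 : 0 ≤ (2 * x i + D) % (2 * D) := Int.emod_nonneg _ (by positivity)
        have h1' : (2 * x i + D) % (2 * D) < 2 * D := Int.emod_lt_of_pos _ (by positivity)
        have hmod : (2 * x i + D) % (2 * D) = 2 * r i + D := by
          rw [Int.emod_def, hrdef, hwdef]; ring
        rw [hmod] at h0 h1'
        nlinarith [sq_nonneg (2 * r i + D)]
      set A : ℤ := ∑ i, x i ^ 2 with hAdef
      set xw : ℤ := ∑ i, x i * w i with hxwdef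
      set fw : ℤ := ∑ i, w i ^ 2 with hfwdef
      set c : ℤ := ∑ i, r i ^ 2 with hcdef
      set p : ℤ := ∑ i, x i * r i with hpdef
      have hc : c = A - 2 * D * xw + D ^ 2 * fw := sum_sq_expand m D x w
      have hp : p = A - D * xw := sum_sq_xr m D x w
      have hc0 : 0 ≤ c := Finset.sum_nonneg fun i _ => sq_nonneg _
      have hcb : 4 * c ≤ 3 * D ^ 2 := by
        have h4c : 4 * c = ∑ i, 4 * r i ^ 2 := by rw [hcdef, Finset.mul_sum]
        rw [h4c]
        calc ∑ i, 4 * r i ^ 2 ≤ ∑ _i : Fin m, D ^ 2 :=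
              Finset.sum_le_sum fun i _ => hrbound i
          _ = m * D ^ 2 := by
              rw [Finset.sum_const, Finset.card_univ, Fintype.card_fin, nsmul_eq_mul]
          _ ≤ 3 * D ^ 2 := by
              have hm' : (m : ℤ) ≤ 3 := by exact_mod_cast hm3
              nlinarith [sq_nonneg D]
      have hclt : c < D ^ 2 := by nlinarith
      by_cases hcz : c = 0
      · -- all r i = 0
        have hr0 : ∀ i ∈ Finset.univ, r i ^ 2 = 0 := by
          rw [← Finset.sum_eq_zero_iff_of_nonneg (fun i _ => sq_nonneg (r i))]
          exact hcz
        refine ⟨w, ?_⟩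
        have hxw' : ∀ i, x i = D * w i := by
          intro i
          have hri : r i = 0 := sq_eq_zero_iff.mp (hr0 i (Finset.mem_univ i))
          simp only [hrdef] at hri
          linarith [hri]
        have hAfw : A = D ^ 2 * fw := by
          rw [hAdef, hfwdef, Finset.mul_sum]
          exact Finset.sum_congr rfl fun i _ => by rw [hxw' i]; ring
        have hDN : D ^ 2 * fw = D ^ 2 * N := by rw [← hAfw]; exact hx
        have hfwN : fw = N := mul_left_cancel₀ (by positivity) hDN
        rw [hfwdef] at hfwN
        exact hfwN
      · have hcpos : 0 < c := lt_of_le_of_ne hc0 (Ne.symm hcz)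
        set e : ℤ := D * N - 2 * xw + D * fw with hedef
        have hce : c = D * e := by rw [hc, hx, hedef]; ring
        have he0 : 0 < e := by
          rcases lt_trichotomy e 0 with hlt | heq | hgt
          · nlinarith
          · rw [heq, mul_zero] at hce; exact absurd hce hcz
          · exact hgt
        have helt : e < D := by nlinarith
        set y : Fin m → ℤ := fun i => x i * (fw - N) + 2 * D * N * w i - 2 * xw * w i
          with hydef
        have key : ∀ i, D ^ 2 * y i = x i * c - 2 * p * r i := by
          intro i
          rw [hydef, hc, hp, hrdef, hx]
          ring
        have hbig : D ^ 4 * ∑ i, y i ^ 2 = c ^ 2 * A := by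
          have h1 : ∑ i, (D ^ 2 * y i) ^ 2 = ∑ i, (x i * c - 2 * p * r i) ^ 2 :=
            Finset.sum_congr rfl fun i _ => by rw [key i]
          have h2 : ∑ i, (D ^ 2 * y i) ^ 2 = D ^ 4 * ∑ i, y i ^ 2 := by
            rw [Finset.mul_sum]
            exact Finset.sum_congr rfl fun i _ => by ring
          have h3 := sum_sq_combo m c p x r
          rw [← hAdef, ← hpdef, ← hcdef] at h3
          rw [← h2, h1, h3]; ring
        have hyN : ∑ i, y i ^ 2 = e ^ 2 * N := by
          have hcc : D ^ 4 * ∑ i, y i ^ 2 = D ^ 4 * (e ^ 2 * N) := by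
            rw [hbig, hce, hx]; ring
          exact mul_left_cancel₀ (by positivity) hcc
        have heN : (e.toNat : ℤ) = e := Int.toNat_of_nonneg he0.le
        have hlt : e.toNat < d := by
          have : (e.toNat : ℤ) < (d : ℤ) := by rw [heN]; exact helt
          exact_mod_cast this
        exact ih e.toNat hlt (by omega) N ⟨y, by rw [hyN, heN]⟩

/-- If `t * r ^ 2` is a sum of `m` squares (`r ≠ 0`, `m > 0`), then so is `t`. -/
private lemma sos_div_sq (m : ℕ) (t r : ℤ) (hr : r ≠ 0)
    (hx : ∃ x : Fin m → ℤ, ∑ i, x i ^ 2 = t * r ^ 2) :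
    ∃ y : Fin m → ℤ, ∑ i, y i ^ 2 = t := by
  rcases le_or_gt m 3 with hm3 | hm4
  · have hd : 0 < r.natAbs := Int.natAbs_pos.mpr hr
    apply sos_descent m hm3 r.natAbs hd
    obtain ⟨x, hx⟩ := hx
    refine ⟨x, ?_⟩
    rw [hx, show ((r.natAbs : ℤ)) ^ 2 = r ^ 2 by rw [← Int.abs_eq_natAbs, sq_abs]]
    ring
  · -- m ≥ 4 : Lagrange
    obtain ⟨x, hx⟩ := hx
    have ht0 : 0 ≤ t := by
      have h1 : 0 ≤ t * r ^ 2 := hx ▸ Finset.sum_nonneg fun i _ => sq_nonneg _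
      have h2 : 0 < r ^ 2 := by positivity
      nlinarith [h1, h2]
    obtain ⟨a, b, c, d, habcd⟩ := Nat.sum_four_squares t.toNat
    set g : ℕ → ℤ := fun n =>
      if n = 0 then (a : ℤ) else if n = 1 then b else if n = 2 then c else
        if n = 3 then d else 0 with hgdef
    refine ⟨fun i => g i, ?_⟩
    have h1 : ∑ i : Fin m, (g (i : ℕ)) ^ 2 = ∑ i ∈ Finset.range m, (g i) ^ 2 :=
      Fin.sum_univ_eq_sum_range (fun i => (g i) ^ 2) m
    have h2 : ∑ i ∈ Finset.range m, (g i) ^ 2 = ∑ i ∈ Finset.range 4, (g i) ^ 2 := by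
      symm
      apply Finset.sum_subset (Finset.range_subset_range.mpr (by omega))
      intro i _ hi
      simp only [Finset.mem_range, not_lt] at hi
      rw [hgdef]
      simp only
      rw [if_neg (by omega), if_neg (by omega), if_neg (by omega), if_neg (by omega)]
      ring
    have h3 : ∑ i ∈ Finset.range 4, (g i) ^ 2 = (a:ℤ)^2 + (b:ℤ)^2 + (c:ℤ)^2 + (d:ℤ)^2 := by
      rw [Finset.sum_range_succ, Finset.sum_range_succ, Finset.sum_range_succ,
        Finset.sum_range_succ, Finset.sum_range_zero, hgdef]
      norm_num
    rw [h1, h2, h3, ← Int.toNat_of_nonneg ht0]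
    exact_mod_cast habcd

/-- Decomposition of a degenerate positive semidefinite form. -/
private lemma degenerate_decomp (a h b : ℤ) (ha : 0 < a) (hb : 0 ≤ b)
    (hΔ : a * b = h ^ 2) :
    ∃ t r s : ℤ, 0 < t ∧ a = t * r ^ 2 ∧ b = t * s ^ 2 ∧
      (h = t * r * s ∨ h = -(t * r * s)) := by
  rcases eq_or_lt_of_le hb with hb0 | hbpos
  · -- b = 0, hence h = 0
    have hh : h = 0 := by nlinarith
    exact ⟨a, 1, 0, ha, by ring, by rw [← hb0]; ring, Or.inl (by rw [hh]; ring)⟩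
  · set g : ℤ := (Int.gcd a b : ℤ) with hgdef
    have hgnat : 0 < Int.gcd a b := Int.gcd_pos_iff.mpr (Or.inl ha.ne')
    have hg0 : 0 < g := by rw [hgdef]; exact_mod_cast hgnat
    have hga : g ∣ a := hgdef ▸ Int.gcd_dvd_left a b
    have hgb : g ∣ b := hgdef ▸ Int.gcd_dvd_right a b
    obtain ⟨a', ha'⟩ := hga
    obtain ⟨b', hb'⟩ := hgb
    have ha'pos : 0 < a' := by nlinarith
    have hb'pos : 0 < b' := by nlinarith
    have hcop : IsCoprime a' b' := by
      rw [Int.isCoprime_iff_gcd_eq_one]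
      have h1 : a / g = a' := by rw [ha']; exact Int.mul_ediv_cancel_left a' hg0.ne'
      have h2 : b / g = b' := by rw [hb']; exact Int.mul_ediv_cancel_left b' hg0.ne'
      rw [← h1, ← h2, hgdef]
      exact Int.gcd_div_gcd_div_gcd hgnat
    have hg2h2 : g ^ 2 ∣ h ^ 2 := ⟨a' * b', by rw [← hΔ, ha', hb']; ring⟩
    have hgh : g ∣ h := (Int.pow_dvd_pow_iff two_ne_zero).mp hg2h2
    obtain ⟨h', hh'⟩ := hgh
    have hab' : a' * b' = h' ^ 2 := by
      have hgg : g ^ 2 * (a' * b') = g ^ 2 * h' ^ 2 := by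
        rw [ha', hb', hh'] at hΔ; linear_combination hΔ
      exact mul_left_cancel₀ (by positivity) hgg
    obtain ⟨r, hr⟩ := Int.sq_of_isCoprime hcop hab'
    have har : a' = r ^ 2 := by
      rcases hr with hr | hr
      · exact hr
      · exfalso; nlinarith [sq_nonneg r]
    obtain ⟨s, hs⟩ := Int.sq_of_isCoprime hcop.symm (by rw [mul_comm]; exact hab')
    have hbs : b' = s ^ 2 := by
      rcases hs with hs | hs
      · exact hs
      · exfalso; nlinarith [sq_nonneg s]
    have hfac : (h' - r * s) * (h' + r * s) = 0 := by
      have hsq : h' ^ 2 = (r * s) ^ 2 := by rw [← hab', har, hbs]; ring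
      linear_combination hsq
    rcases mul_eq_zero.mp hfac with h0 | h0
    · exact ⟨g, r, s, hg0, by rw [ha', har], by rw [hb', hbs],
        Or.inl (by rw [hh']; linear_combination g * h0)⟩
    · exact ⟨g, r, s, hg0, by rw [ha', har], by rw [hb', hbs],
        Or.inr (by rw [hh']; linear_combination g * h0)⟩

theorem stmt5 (a h b : ℤ) (ha : 0 < a) (hb : 0 ≤ b) (hΔ : a * b - h ^ 2 = 0)
    (m : ℕ) (hm : 0 < m) :
    (IsSumSqLin m a h b ↔ a ∈ sos m) ∧
    (IsSumSqLin m a h b →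
      ∃ r s t : ℤ, 0 < t ∧ t ∈ sos m ∧ a = t * r ^ 2 ∧ b = t * s ^ 2 ∧
        (h = t * r * s ∨ h = -(t * r * s))) := by
  have hΔ' : a * b = h ^ 2 := by linarith
  obtain ⟨t, r, s, ht, har, hbs, hhs⟩ := degenerate_decomp a h b ha hb hΔ'
  have hr0 : r ≠ 0 := by
    intro hr
    rw [hr] at har
    simp at har
    omega
  have hsos : a ∈ sos m → ∃ γ : Fin m → ℤ, ∑ i, γ i ^ 2 = t := by
    rintro ⟨x, hxa⟩
    exact sos_div_sq m t r hr0 ⟨x, by rw [hxa, har]⟩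
  constructor
  · constructor
    · rintro ⟨α, β, h1, _, _⟩
      exact ⟨α, h1⟩
    · intro hamem
      obtain ⟨γ, hγ⟩ := hsos hamem
      rcases hhs with hh | hh
      · refine ⟨fun i => r * γ i, fun i => s * γ i, ?_, ?_, ?_⟩
        · rw [sum_smul_sq, hγ, har]; ring
        · rw [sum_smul_mul, hγ, hh]; ring
        · rw [sum_smul_sq, hγ, hbs]; ring
      · refine ⟨fun i => r * γ i, fun i => -s * γ i, ?_, ?_, ?_⟩
        · rw [sum_smul_sq, hγ, har]; ring
        · rw [sum_smul_mul, hγ, hh]; ring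
        · rw [sum_smul_sq, hγ, hbs]; ring
  · rintro ⟨α, _, h1, _, _⟩
    obtain ⟨γ, hγ⟩ := hsos ⟨α, h1⟩
    exact ⟨r, s, t, ht, ⟨γ, hγ⟩, har, hbs, hhs⟩
end

section
/- Let a, h, b be integers with a > 0, b > 0 and Δ = ab − h² > 0, and let d = gcd(a, h, b). Then the binary quadratic form aX² + 2hXY + bY² is a sum of 2 squares of integral linear forms if and only if Δ is a perfect square and d ∈ sos(2). -/
open Zsqrtd

local notation "GI" => GaussianInt

lemma split_gcd (x y : GI) (hx : x ≠ 0) :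
    ∃ x' y', x = EuclideanDomain.gcd x y * x' ∧ y = EuclideanDomain.gcd x y * y' ∧
      IsCoprime x' y' := by
  obtain ⟨x', hx'⟩ := EuclideanDomain.gcd_dvd_left x y
  obtain ⟨y', hy'⟩ := EuclideanDomain.gcd_dvd_right x y
  refine ⟨x', y', hx', hy', ?_⟩
  have hg0 : EuclideanDomain.gcd x y ≠ 0 := fun h => hx (EuclideanDomain.gcd_eq_zero_iff.mp h).1
  have hbez := EuclideanDomain.gcd_eq_gcd_ab x y
  refine ⟨EuclideanDomain.gcdA x y, EuclideanDomain.gcdB x y, ?_⟩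
  apply mul_left_cancel₀ hg0
  linear_combination -hbez - EuclideanDomain.gcdA x y * hx' - EuclideanDomain.gcdB x y * hy'

lemma dot_eq (x y : GI) : x.re * y.re + x.im * y.im = (star x * y).re := by
  simp [Zsqrtd.re_mul, Zsqrtd.re_star, Zsqrtd.im_star]

lemma sq_add_sq_eq_norm (x : GI) : x.re ^ 2 + x.im ^ 2 = Zsqrtd.norm x := by
  simp [Zsqrtd.norm_def]; ring

lemma cross_eq (x y : GI) : x.re * y.im - x.im * y.re = (star x * y).im := by
  simp [Zsqrtd.im_mul, Zsqrtd.re_star, Zsqrtd.im_star]; ring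

lemma norm_cast_mul (x : GI) : ((Zsqrtd.norm x : ℤ) : GI) = x * star x := Zsqrtd.norm_eq_mul_conj x

lemma coreF (A' B' : GI) (hco : IsCoprime A' B') (e : ℤ) (he0 : (e : GI) ≠ 0)
    (h1 : (e : GI) ∣ A' * star A') (h2 : (e : GI) ∣ B' * star B')
    (h3 : (e : GI) ∣ star A' * B') : IsUnit (e : GI) := by
  have hco' : IsCoprime (star A') (star B') := by
    have := hco.map (starRingEnd GI)
    simpa [starRingEnd_apply] using this
  have h3' : (e : GI) ∣ A' * star B' := by
    obtain ⟨c, hc⟩ := h3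
    refine ⟨star c, ?_⟩
    have := congrArg star hc
    simpa [mul_comm, mul_left_comm] using this
  -- step 1 : e ∣ A'
  have heA : (e : GI) ∣ A' := by
    obtain ⟨m, A'', hEm, hA'', copm⟩ := split_gcd (e : GI) A' he0
    have hg0 : EuclideanDomain.gcd (e : GI) A' ≠ 0 := by
      intro h; rw [h, zero_mul] at hEm; exact he0 hEm
    have hm1 : m ∣ A'' * star A' := by
      have : EuclideanDomain.gcd (e : GI) A' * m ∣
          EuclideanDomain.gcd (e : GI) A' * (A'' * star A') := by
        rw [← hEm, ← mul_assoc, ← hA'']; exact h1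
      exact (mul_dvd_mul_iff_left hg0).mp this
    have hm2 : m ∣ A'' * star B' := by
      have : EuclideanDomain.gcd (e : GI) A' * m ∣
          EuclideanDomain.gcd (e : GI) A' * (A'' * star B') := by
        rw [← hEm, ← mul_assoc, ← hA'']; exact h3'
      exact (mul_dvd_mul_iff_left hg0).mp this
    have hmA : m ∣ star A' := copm.dvd_of_dvd_mul_left hm1
    have hmB : m ∣ star B' := copm.dvd_of_dvd_mul_left hm2
    have hmu : IsUnit m := hco'.isUnit_of_dvd' hmA hmB
    obtain ⟨n, hn⟩ := isUnit_iff_exists_inv.mp hmu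
    have hge : (e : GI) ∣ EuclideanDomain.gcd (e : GI) A' :=
      ⟨n, by conv_rhs => rw [hEm, mul_assoc, hn, mul_one]⟩
    exact hge.trans ⟨A'', hA''⟩
  -- step 2 : e ∣ B'
  have heB : (e : GI) ∣ B' := by
    obtain ⟨m, B'', hEm, hB'', copm⟩ := split_gcd (e : GI) B' he0
    have hg0 : EuclideanDomain.gcd (e : GI) B' ≠ 0 := by
      intro h; rw [h, zero_mul] at hEm; exact he0 hEm
    have hm1 : m ∣ B'' * star B' := by
      have : EuclideanDomain.gcd (e : GI) B' * m ∣
          EuclideanDomain.gcd (e : GI) B' * (B'' * star B') := by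
        rw [← hEm, ← mul_assoc, ← hB'']; exact h2
      exact (mul_dvd_mul_iff_left hg0).mp this
    have hm2 : m ∣ B'' * star A' := by
      have : EuclideanDomain.gcd (e : GI) B' * m ∣
          EuclideanDomain.gcd (e : GI) B' * (B'' * star A') := by
        rw [← hEm, ← mul_assoc, ← hB'', mul_comm B' (star A')]; exact h3
      exact (mul_dvd_mul_iff_left hg0).mp this
    have hmB : m ∣ star B' := copm.dvd_of_dvd_mul_left hm1
    have hmA : m ∣ star A' := copm.dvd_of_dvd_mul_left hm2
    have hmu : IsUnit m := hco'.isUnit_of_dvd' hmA hmB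
    obtain ⟨n, hn⟩ := isUnit_iff_exists_inv.mp hmu
    have hge : (e : GI) ∣ EuclideanDomain.gcd (e : GI) B' :=
      ⟨n, by conv_rhs => rw [hEm, mul_assoc, hn, mul_one]⟩
    exact hge.trans ⟨B'', hB''⟩
  exact hco.isUnit_of_dvd' heA heB

lemma intCast_ne_zero_GI {n : ℤ} (hn : n ≠ 0) : ((n : ℤ) : GI) ≠ 0 := by
  intro h
  apply hn
  have := congrArg Zsqrtd.re h
  simpa using this

lemma coreB (a₀ b₀ h₀ k₀ : ℤ) (ha : 0 < a₀)
    (hprim : (Int.gcd a₀ (Int.gcd h₀ b₀) : ℤ) = 1)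
    (habk : a₀ * b₀ = h₀ ^ 2 + k₀ ^ 2) :
    ∃ A B : GI, A.norm = a₀ ∧ B.norm = b₀ ∧ star A * B = ⟨h₀, k₀⟩ := by
  set ζ : GI := ⟨h₀, k₀⟩ with hζdef
  have hζre : ζ.re = h₀ := rfl
  have hζim : ζ.im = k₀ := rfl
  have hnormζ : ζ.norm = h₀ ^ 2 + k₀ ^ 2 := by
    rw [Zsqrtd.norm_def, hζre, hζim]; ring
  have ha0 : a₀ ≠ 0 := ha.ne'
  have ha0' : ((a₀ : ℤ) : GI) ≠ 0 := intCast_ne_zero_GI ha0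
  obtain ⟨ε, β, hε, hβ, cop⟩ := split_gcd ((a₀ : ℤ) : GI) ζ ha0'
  set δ := EuclideanDomain.gcd ((a₀ : ℤ) : GI) ζ with hδdef
  have hδ0 : δ ≠ 0 := by intro h; rw [h, zero_mul] at hε; exact ha0' hε
  have hε0 : ε ≠ 0 := by intro h; rw [h, mul_zero] at hε; exact ha0' hε
  -- a₀ divides ζ * star ζ
  have hdvd : ((a₀ : ℤ) : GI) ∣ ζ * star ζ := by
    rw [← Zsqrtd.norm_eq_mul_conj, hnormζ, ← habk]
    exact ⟨((b₀ : ℤ) : GI), by push_cast; ring⟩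
  have hε1 : ε ∣ β * star ζ := by
    have : δ * ε ∣ δ * (β * star ζ) := by rw [← hε, ← mul_assoc, ← hβ]; exact hdvd
    exact (mul_dvd_mul_iff_left hδ0).mp this
  have hεζ : ε ∣ star ζ := cop.dvd_of_dvd_mul_left hε1
  have hsεζ : star ε ∣ ζ := by
    obtain ⟨c, hc⟩ := hεζ
    exact ⟨star c, by simpa [mul_comm] using congrArg star hc⟩
  have hsεa : star ε ∣ ((a₀ : ℤ) : GI) := by
    refine ⟨star δ, ?_⟩
    have := congrArg star hε
    simpa [mul_comm] using this
  have hsεδ : star ε ∣ δ := EuclideanDomain.dvd_gcd hsεa hsεζ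
  obtain ⟨σ, hσ⟩ := hsεδ
  -- a₀ = σ * (norm ε)
  have key : ((a₀ : ℤ) : GI) = σ * ((ε.norm : ℤ) : GI) := by
    rw [Zsqrtd.norm_eq_mul_conj, hε, hσ]; ring
  have hNε0 : ε.norm ≠ 0 := fun h => hε0 ((Zsqrtd.norm_eq_zero_iff (by norm_num) ε).mp h)
  have him : σ.im = 0 := by
    have h1 := congrArg Zsqrtd.im key
    simp [Zsqrtd.im_mul] at h1
    rcases h1 with h | h
    · exact h
    · exact absurd h hε0
  have hre : a₀ = σ.re * ε.norm := by
    have h1 := congrArg Zsqrtd.re key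
    simpa [Zsqrtd.re_mul] using h1
  set s := σ.re with hsdef
  have hσs : σ = ((s : ℤ) : GI) := by
    ext <;> simp [him, hsdef]
  -- s divides h₀, k₀
  have hsζ : ((s : ℤ) : GI) ∣ ζ := by
    rw [← hσs]
    exact dvd_trans ⟨star ε, by rw [hσ]; ring⟩ ⟨β, hβ⟩
  obtain ⟨hsh, hsk⟩ := (Zsqrtd.intCast_dvd s ζ).mp hsζ
  rw [hζre] at hsh
  rw [hζim] at hsk
  -- b₀ = s * β.norm
  have hnorms : a₀ * b₀ = ε.norm * (s * s) * β.norm := by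
    have h1 := congrArg Zsqrtd.norm hβ
    rw [Zsqrtd.norm_mul, hσ, Zsqrtd.norm_mul, Zsqrtd.norm_conj, hσs,
      Zsqrtd.norm_intCast, hnormζ] at h1
    rw [habk, h1]
  have hb₀ : b₀ = s * β.norm := by
    have hsNε : s * ε.norm ≠ 0 := by rw [← hre]; exact ha0
    apply mul_left_cancel₀ hsNε
    linear_combination -b₀ * hre + hnorms
  -- s = 1
  have hsd : s ∣ (1 : ℤ) := by
    rw [← hprim]
    exact Int.dvd_coe_gcd ⟨ε.norm, hre⟩ (Int.dvd_coe_gcd hsh ⟨β.norm, hb₀⟩)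
  have hs1 : s = 1 := by
    rcases Int.isUnit_iff.mp (isUnit_of_dvd_one hsd) with h | h
    · exact h
    · exfalso
      have hNεnn : 0 ≤ ε.norm := Zsqrtd.norm_nonneg (by norm_num) ε
      rw [h] at hre
      nlinarith
  have hNδ : δ.norm = a₀ := by
    have h1 := congrArg Zsqrtd.norm hσ
    rw [Zsqrtd.norm_mul, Zsqrtd.norm_conj, hσs, Zsqrtd.norm_intCast, hs1] at h1
    rw [h1, hre, hs1]; ring
  refine ⟨star δ, β, ?_, ?_, ?_⟩
  · rw [Zsqrtd.norm_conj]; exact hNδ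
  · rw [hb₀, hs1, one_mul]
  · rw [star_star, ← hβ]

private theorem stmt6' (a h b : ℤ) (ha : 0 < a) (hb : 0 < b) (hΔ : 0 < a * b - h ^ 2) :
    (∃ α β : Fin 2 → ℤ,
      (∑ i, (α i) ^ 2) = a ∧ (∑ i, α i * β i) = h ∧ (∑ i, (β i) ^ 2) = b) ↔
      (∃ k : ℤ, a * b - h ^ 2 = k ^ 2) ∧
        (∃ c : Fin 2 → ℤ, (∑ i, (c i) ^ 2) = ((Int.gcd a (Int.gcd h b) : ℕ) : ℤ)) := by
  constructor
  · rintro ⟨α, β, hA, hH, hB⟩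
    rw [Fin.sum_univ_two] at hA hH hB
    set A : GI := ⟨α 0, α 1⟩ with hAdef
    set B : GI := ⟨β 0, β 1⟩ with hBdef
    have hnA : A.norm = a := by rw [← sq_add_sq_eq_norm]; exact hA
    have hnB : B.norm = b := by rw [← sq_add_sq_eq_norm]; exact hB
    constructor
    · exact ⟨α 0 * β 1 - α 1 * β 0, by
        linear_combination (-b) * hA - (α 0 ^ 2 + α 1 ^ 2) * hB
          + (α 0 * β 0 + α 1 * β 1 + h) * hH⟩
    · have hA0 : A ≠ 0 := by
        intro h0
        rw [h0, Zsqrtd.norm_zero] at hnA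
        exact ha.ne' hnA.symm
      obtain ⟨A', B', hA', hB', cop⟩ := split_gcd A B hA0
      set G := EuclideanDomain.gcd A B with hGdef
      set W := star A' * B' with hWdef
      have hGnn : 0 ≤ G.norm := Zsqrtd.norm_nonneg (by norm_num) G
      have ha' : a = G.norm * A'.norm := by rw [← hnA, hA', Zsqrtd.norm_mul]
      have hb' : b = G.norm * B'.norm := by rw [← hnB, hB', Zsqrtd.norm_mul]
      have hAB : star A * B = ((G.norm : ℤ) : GI) * W := by
        rw [hA', hB', star_mul', Zsqrtd.norm_eq_mul_conj, hWdef]; ring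
      have hh' : h = G.norm * W.re := by
        have h1 : h = (((G.norm : ℤ) : GI) * W).re :=
          (hH.symm.trans (dot_eq A B)).trans (congrArg Zsqrtd.re hAB)
        simpa [Zsqrtd.re_mul] using h1
      -- the reduced gcd e
      set e : ℕ := Int.gcd A'.norm ((Int.gcd W.re B'.norm : ℕ) : ℤ) with hedef
      have hA'pos : 0 < A'.norm := by
        rcases lt_or_ge 0 A'.norm with h' | h'
        · exact h'
        · nlinarith [ha, ha', hGnn]
      have heA : ((e : ℤ)) ∣ A'.norm := Int.gcd_dvd_left _ _
      have heH : ((e : ℤ)) ∣ W.re :=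
        dvd_trans (Int.gcd_dvd_right _ _) (Int.gcd_dvd_left _ _)
      have heB : ((e : ℤ)) ∣ B'.norm :=
        dvd_trans (Int.gcd_dvd_right _ _) (Int.gcd_dvd_right _ _)
      have hWnorm : A'.norm * B'.norm = W.re ^ 2 + W.im ^ 2 := by
        rw [sq_add_sq_eq_norm, hWdef, Zsqrtd.norm_mul, Zsqrtd.norm_conj]
      have heK : ((e : ℤ)) ∣ W.im := by
        have hd1 : ((e : ℤ)) ^ 2 ∣ W.re ^ 2 + W.im ^ 2 := by
          rw [← hWnorm, sq]; exact mul_dvd_mul heA heB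
        have h2 : ((e : ℤ)) ^ 2 ∣ W.im ^ 2 := by
          have h3 := dvd_sub hd1 (pow_dvd_pow_of_dvd heH 2)
          simpa using h3
        exact (Int.pow_dvd_pow_iff two_ne_zero).mp h2
      have he0 : ((e : ℤ) : GI) ≠ 0 := by
        apply intCast_ne_zero_GI
        intro h0
        rw [h0] at heA
        exact hA'pos.ne' (zero_dvd_iff.mp heA)
      have hu : IsUnit ((e : ℤ) : GI) := by
        apply coreF A' B' cop (e : ℤ) he0
        · rw [← Zsqrtd.norm_eq_mul_conj]
          exact (Zsqrtd.intCast_dvd_intCast _ _).mpr heA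
        · rw [← Zsqrtd.norm_eq_mul_conj]
          exact (Zsqrtd.intCast_dvd_intCast _ _).mpr heB
        · exact (Zsqrtd.intCast_dvd _ _).mpr ⟨heH, heK⟩
      have he1 : e = 1 := by
        have h4 : ((e : ℤ) : GI) ∣ ((1 : ℤ) : GI) := by
          simpa using isUnit_iff_dvd_one.mp hu
        have h5 : (e : ℤ) ∣ (1 : ℤ) := (Zsqrtd.intCast_dvd_intCast _ _).mp h4
        exact Nat.dvd_one.mp (Int.ofNat_dvd.mp (by simpa using h5))
      -- factor the gcd
      have h1 : Int.gcd h b = G.norm.natAbs * Int.gcd W.re B'.norm := by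
        rw [hh', hb', Int.gcd_mul_left]
      have h2 : ((Int.gcd h b : ℕ) : ℤ) = G.norm * ((Int.gcd W.re B'.norm : ℕ) : ℤ) := by
        rw [h1]; push_cast; rw [abs_of_nonneg hGnn]
      have hgcd : Int.gcd a ((Int.gcd h b : ℕ) : ℤ) = G.norm.natAbs * e := by
        rw [ha', h2, Int.gcd_mul_left, hedef]
      refine ⟨![G.re, G.im], ?_⟩
      rw [Fin.sum_univ_two, hgcd, he1]
      show G.re ^ 2 + G.im ^ 2 = _
      rw [sq_add_sq_eq_norm]
      push_cast
      rw [abs_of_nonneg hGnn]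
      ring
  · rintro ⟨⟨k, hk⟩, c, hc⟩
    rw [Fin.sum_univ_two] at hc
    set d : ℕ := Int.gcd a (Int.gcd h b) with hddef
    set D : ℤ := (d : ℤ) with hDdef
    have hdpos : 0 < d := Int.gcd_pos_of_ne_zero_left _ ha.ne'
    have hDpos : 0 < D := by rw [hDdef]; exact_mod_cast hdpos
    have hDa : D ∣ a := Int.gcd_dvd_left _ _
    have hDh : D ∣ h := dvd_trans (Int.gcd_dvd_right _ _) (Int.gcd_dvd_left _ _)
    have hDb : D ∣ b := dvd_trans (Int.gcd_dvd_right _ _) (Int.gcd_dvd_right _ _)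
    obtain ⟨a₀, ha₀⟩ := hDa
    obtain ⟨h₀, hh₀⟩ := hDh
    obtain ⟨b₀, hb₀⟩ := hDb
    have hDk : D ∣ k := by
      have h2 : D ^ 2 ∣ k ^ 2 :=
        ⟨a₀ * b₀ - h₀ ^ 2, by rw [← hk, ha₀, hb₀, hh₀]; ring⟩
      exact (Int.pow_dvd_pow_iff two_ne_zero).mp h2
    obtain ⟨k₀, hk₀⟩ := hDk
    have habk : a₀ * b₀ = h₀ ^ 2 + k₀ ^ 2 := by
      have hD2 : D ^ 2 ≠ 0 := pow_ne_zero _ hDpos.ne'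
      apply mul_left_cancel₀ hD2
      rw [ha₀, hb₀, hh₀, hk₀] at hk
      linear_combination hk
    have ha₀pos : 0 < a₀ := by
      rw [ha₀] at ha
      nlinarith
    -- primitivity of the reduced form
    have hprim : (Int.gcd a₀ (Int.gcd h₀ b₀) : ℤ) = 1 := by
      have h1 : Int.gcd h b = d * Int.gcd h₀ b₀ := by
        rw [hh₀, hb₀, Int.gcd_mul_left, hDdef, Int.natAbs_natCast]
      have h2 : ((Int.gcd h b : ℕ) : ℤ) = D * ((Int.gcd h₀ b₀ : ℕ) : ℤ) := by
        rw [h1]; push_cast; ring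
      have h3 : d = d * Int.gcd a₀ ((Int.gcd h₀ b₀ : ℕ) : ℤ) := by
        conv_lhs => rw [hddef]
        rw [ha₀, h2, Int.gcd_mul_left, hDdef, Int.natAbs_natCast]
      have h4 : Int.gcd a₀ ((Int.gcd h₀ b₀ : ℕ) : ℤ) = 1 := by
        have := Nat.eq_of_mul_eq_mul_left hdpos (h3.symm.trans (mul_one d).symm)
        exact this
      exact_mod_cast h4
    obtain ⟨A, B, hNA, hNB, hstAB⟩ := coreB a₀ b₀ h₀ k₀ ha₀pos hprim habk
    -- the Gaussian integer of norm d
    set γ : GI := ⟨c 0, c 1⟩ with hγdef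
    have hγ : γ.norm = D := by rw [← sq_add_sq_eq_norm]; exact hc
    set Af : GI := γ * A with hAfdef
    set Bf : GI := γ * B with hBfdef
    have hABf : star Af * Bf = ((D : ℤ) : GI) * (⟨h₀, k₀⟩ : GI) := by
      calc star Af * Bf = (γ * star γ) * (star A * B) := by
            rw [hAfdef, hBfdef, star_mul']; ring
        _ = ((γ.norm : ℤ) : GI) * (⟨h₀, k₀⟩ : GI) := by
            rw [← Zsqrtd.norm_eq_mul_conj, hstAB]
        _ = ((D : ℤ) : GI) * (⟨h₀, k₀⟩ : GI) := by rw [hγ]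
    refine ⟨![Af.re, Af.im], ![Bf.re, Bf.im], ?_, ?_, ?_⟩
    · rw [Fin.sum_univ_two]
      show Af.re ^ 2 + Af.im ^ 2 = a
      rw [sq_add_sq_eq_norm, hAfdef, Zsqrtd.norm_mul, hγ, hNA, ← ha₀]
    · rw [Fin.sum_univ_two]
      show Af.re * Bf.re + Af.im * Bf.im = h
      rw [dot_eq, hABf, hh₀]
      simp [Zsqrtd.re_mul]
    · rw [Fin.sum_univ_two]
      show Bf.re ^ 2 + Bf.im ^ 2 = b
      rw [sq_add_sq_eq_norm, hBfdef, Zsqrtd.norm_mul, hγ, hNB, ← hb₀]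


theorem stmt6 (a h b : ℤ) (ha : 0 < a) (hb : 0 < b) (hΔ : 0 < a * b - h ^ 2) :
    IsSumSqLin 2 a h b ↔
      (∃ k : ℤ, a * b - h ^ 2 = k ^ 2) ∧ ((Int.gcd a (Int.gcd h b) : ℤ) ∈ sos 2) := by
  have := stmt6' a h b ha hb hΔ
  simpa [IsSumSqLin, sos, Set.mem_setOf_eq] using this
end

section
/- Let n be a positive integer and T an integer. Then T ∈ 𝒮_3(n) if and only if one of the following holds: (I) there exists a positive integer t with n = 3t² and (T = 3t or T = −3t); or (II) 3n − T² > 0 and, writing 3n − T² = D₀·D₁² with positive integers D₀, D₁ and D₀ squarefree, one has: (a) every prime q dividing D₀ with q ∉ {2, 3} satisfies q ≡ 1 (mod 6), and (b) if 3 divides D₀, or if 3 divides both T and n, then 2 divides D₀. -/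
def loeschian : Submonoid ℕ where
  carrier := {M | ∃ a b : ℤ, a ^ 2 + a * b + b ^ 2 = M}
  one_mem' := ⟨1, 0, by norm_num⟩
  mul_mem' := by
    rintro M K ⟨a, b, hM⟩ ⟨c, d, hK⟩
    exact ⟨a * c - b * d, a * d + b * c + b * d, by push_cast; rw [← hM, ← hK]; ring⟩

lemma sq_mem_loeschian (m : ℕ) : m ^ 2 ∈ loeschian := ⟨m, 0, by push_cast; ring⟩

lemma exists_mem_loeschian_eq (a b : ℤ) :
    ∃ M ∈ loeschian, (M : ℤ) = a ^ 2 + a * b + b ^ 2 := by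
  obtain ⟨M, hM⟩ := Int.eq_ofNat_of_zero_le (a := a ^ 2 + a * b + b ^ 2)
    (by nlinarith [sq_nonneg (a + b)])
  exact ⟨M, ⟨a, b, hM⟩, hM.symm⟩

lemma ZMod.exists_sq_add_self_add_one_eq_zero_iff {p : ℕ} [hp : Fact p.Prime] :
    (∃ x : ZMod p, x ^ 2 + x + 1 = 0) ↔ p % 3 ≠ 2 := by
  constructor
  · rintro ⟨x, hx⟩ h2
    have hx1 : x ≠ 1 := by
      rintro rfl
      have h3 : ((3 : ℕ) : ZMod p) = 0 := by push_cast; linear_combination hx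
      rw [ZMod.natCast_eq_zero_iff, Nat.prime_dvd_prime_iff_eq hp.out Nat.prime_three] at h3
      omega
    have hx0 : x ≠ 0 := by rintro rfl; norm_num at hx
    have h3 : orderOf x = 3 := orderOf_eq_prime (by linear_combination (x - 1) * hx) hx1
    have := ZMod.orderOf_dvd_card_sub_one hx0
    rw [h3] at this
    omega
  · intro h
    obtain rfl | hp3 := eq_or_ne p 3
    · exact ⟨1, rfl⟩
    have h0 : ¬3 ∣ p := fun h3 =>
      hp3 ((Nat.prime_dvd_prime_iff_eq Nat.prime_three hp.out).mp h3).symm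
    obtain ⟨u, hu⟩ :=
      exists_prime_orderOf_dvd_card (G := (ZMod p)ˣ) 3 (by rw [ZMod.card_units]; omega)
    have hu3 : (u : ZMod p) ^ 3 = 1 := by
      rw [← Units.val_pow_eq_pow_val, ← hu, pow_orderOf_eq_one, Units.val_one]
    have hu1 : (u : ZMod p) - 1 ≠ 0 := by
      rw [sub_ne_zero, Ne, Units.val_eq_one, ← orderOf_eq_one_iff, hu]
      norm_num
    exact ⟨u, mul_left_cancel₀ hu1 (by linear_combination hu3)⟩

lemma Nat.Prime.dvd_of_dvd_sq_add_mul_add_sq {q : ℕ} (hq : q.Prime) (hq3 : q % 3 = 2) {a b : ℤ}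
    (h : (q : ℤ) ∣ a ^ 2 + a * b + b ^ 2) : (q : ℤ) ∣ a ∧ (q : ℤ) ∣ b := by
  have := Fact.mk hq
  simp only [← ZMod.intCast_zmod_eq_zero_iff_dvd] at h ⊢
  push_cast at h
  have hb : (b : ZMod q) = 0 := by
    by_contra hb
    refine ZMod.exists_sq_add_self_add_one_eq_zero_iff.mp ⟨(a : ZMod q) / (b : ZMod q), ?_⟩ hq3
    field_simp
    linear_combination h
  exact ⟨by simpa [hb] using h, hb⟩

-- Thue's lemma: pigeonhole on the `(⌊√p⌋ + 1)²` values `i - u j`.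
lemma ZMod.exists_sq_lt_intCast_eq_mul {p : ℕ} (hp : ¬IsSquare p) (u : ZMod p) :
    ∃ a b : ℤ, (a, b) ≠ 0 ∧ a ^ 2 < p ∧ b ^ 2 < p ∧ (a : ZMod p) = u * b := by
  have : NeZero p := ⟨by rintro rfl; exact hp ⟨0, rfl⟩⟩
  set r := p.sqrt
  have hr : (r : ℤ) ^ 2 < p := by
    have : r * r < p := (Nat.sqrt_le p).lt_of_ne fun h => hp ⟨r, h.symm⟩
    exact_mod_cast (sq r).symm ▸ this
  have hdiff (i j : Fin (r + 1)) : ((i : ℤ) - j) ^ 2 < p := by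
    have := i.is_lt; have := j.is_lt
    exact (sq_le_sq' (by omega) (by omega)).trans_lt hr
  obtain ⟨⟨i, j⟩, ⟨i', j'⟩, hne, heq⟩ := Fintype.exists_ne_map_eq_of_card_lt
    (fun x : Fin (r + 1) × Fin (r + 1) => ((x.1 : ℕ) : ZMod p) - u * ((x.2 : ℕ) : ZMod p))
    (by simpa [ZMod.card] using Nat.lt_succ_sqrt p)
  refine ⟨(i : ℤ) - i', (j : ℤ) - j', ?_, hdiff i i', hdiff j j', ?_⟩
  · contrapose! hne
    simp only [Prod.mk_eq_zero, sub_eq_zero, Nat.cast_inj] at hne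
    ext <;> simp [hne.1, hne.2]
  · push_cast
    linear_combination heq

lemma Nat.Prime.mem_loeschian {p : ℕ} (hp : p.Prime) (hp3 : p % 3 ≠ 2) : p ∈ loeschian := by
  have := Fact.mk hp
  obtain ⟨u, hu⟩ := ZMod.exists_sq_add_self_add_one_eq_zero_iff.mpr hp3
  obtain ⟨a, b, hab, ha, hb, hu'⟩ :=
    ZMod.exists_sq_lt_intCast_eq_mul (Nat.prime_iff.mp hp).not_isSquare u
  obtain ⟨c, hc⟩ : (p : ℤ) ∣ a ^ 2 + a * b + b ^ 2 := by
    rw [← ZMod.intCast_zmod_eq_zero_iff_dvd]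
    push_cast
    rw [hu']
    linear_combination (b : ZMod p) ^ 2 * hu
  have hpos : 0 < a ^ 2 + a * b + b ^ 2 := by
    contrapose! hab
    have hb0 : b = 0 := by nlinarith [sq_nonneg (2 * a + b)]
    have ha0 : a = 0 := by subst hb0; nlinarith
    simp [ha0, hb0]
  have hp0 : (0 : ℤ) < p := by exact_mod_cast hp.pos
  have hc1 : 0 < c := pos_of_mul_pos_right (hc ▸ hpos) hp0.le
  have hc3 : c < 3 := by nlinarith [sq_nonneg (a - b)]
  interval_cases c
  · exact ⟨a, b, by rw [hc, mul_one]⟩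
  -- `a² + ab + b² = 2p` forces `2 ∣ a, b`, hence `4 ∣ 2p`, so `p = 2`, which has `2 % 3 = 2`.
  obtain ⟨⟨a', rfl⟩, ⟨b', rfl⟩⟩ :=
    Nat.prime_two.dvd_of_dvd_sq_add_mul_add_sq (by norm_num) ⟨p, by push_cast; rw [hc]; ring⟩
  push_cast at hc
  have : (2 : ℤ) ∣ p := ⟨a' ^ 2 + a' * b' + b' ^ 2, by linarith⟩
  have := (Nat.prime_dvd_prime_iff_eq Nat.prime_two hp).mp (by exact_mod_cast this)
  omega

lemma even_factorization_of_mem_loeschian {M q : ℕ} (hM : M ∈ loeschian) (hq : q.Prime)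
    (hq3 : q % 3 = 2) : Even (M.factorization q) := by
  induction M using Nat.strong_induction_on with
  | _ M ih =>
  obtain ⟨a, b, hab⟩ := hM
  obtain hqM | hqM := (em (q ∣ M)).symm
  · simp [Nat.factorization_eq_zero_of_not_dvd hqM]
  obtain ⟨⟨a', rfl⟩, ⟨b', rfl⟩⟩ :=
    hq.dvd_of_dvd_sq_add_mul_add_sq hq3 (hab ▸ Int.natCast_dvd_natCast.mpr hqM)
  obtain ⟨M', hM'⟩ := Int.eq_ofNat_of_zero_le (a := a' ^ 2 + a' * b' + b' ^ 2)
    (by nlinarith [sq_nonneg (a' + b')])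
  have hMM' : M = q ^ 2 * M' := by zify; rw [← hab, ← hM']; ring
  rcases M'.eq_zero_or_pos with rfl | hM'0
  · simp [hMM']
  have hlt : M' < M := hMM' ▸ lt_mul_left hM'0 (Nat.one_lt_pow two_ne_zero hq.one_lt)
  rw [hMM', Nat.factorization_mul (pow_ne_zero 2 hq.ne_zero) hM'0.ne', hq.factorization_pow]
  simpa [parity_simps] using ih M' hlt ⟨a', b', hM'⟩

lemma mem_loeschian_of_even_factorization {M : ℕ}
    (h : ∀ q, q.Prime → q % 3 = 2 → Even (M.factorization q)) : M ∈ loeschian := by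
  rcases M.eq_zero_or_pos with rfl | hM
  · exact ⟨0, 0, by simp⟩
  rw [← Nat.prod_factorization_pow_eq_self hM.ne']
  refine SubmonoidClass.finsuppProd_mem _ _ _ fun p hp => ?_
  have hpp : p.Prime := by
    by_contra hnp
    exact hp (Nat.factorization_eq_zero_of_not_prime M hnp)
  by_cases hp3 : p % 3 = 2
  · obtain ⟨k, hk⟩ := h p hpp hp3
    rw [hk, ← two_mul, pow_mul']
    exact sq_mem_loeschian _
  · exact pow_mem (hpp.mem_loeschian hp3) _

lemma mem_loeschian_iff {M : ℕ} :
    M ∈ loeschian ↔ ∀ q, q.Prime → q % 3 = 2 → Even (M.factorization q) :=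
  ⟨fun hM _ hq hq3 => even_factorization_of_mem_loeschian hM hq hq3,
    mem_loeschian_of_even_factorization⟩

lemma Squarefree.dvd_iff_odd_factorization_mul_sq {D₀ D₁ q : ℕ} (hD₀ : Squarefree D₀)
    (hD₁ : D₁ ≠ 0) (hq : q.Prime) : q ∣ D₀ ↔ Odd ((D₀ * D₁ ^ 2).factorization q) := by
  rw [Nat.factorization_mul hD₀.ne_zero (pow_ne_zero 2 hD₁), Nat.factorization_pow,
    hq.dvd_iff_one_le_factorization hD₀.ne_zero]
  have := hD₀.natFactorization_le_one q
  simp only [Finsupp.add_apply, Finsupp.smul_apply, smul_eq_mul, Nat.odd_iff]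
  omega

lemma exists_mem_loeschian_mul_sq_eq_two_mul_iff {D₀ D₁ : ℕ} (hD₀ : Squarefree D₀)
    (hD₁ : D₁ ≠ 0) :
    (∃ M ∈ loeschian, D₀ * D₁ ^ 2 = 2 * M) ↔
      (∀ q : ℕ, q.Prime → q ∣ D₀ → q ≠ 2 → q ≠ 3 → q % 6 = 1) ∧ 2 ∣ D₀ := by
  have hodd {q : ℕ} (hq : q.Prime) := hD₀.dvd_iff_odd_factorization_mul_sq hD₁ hq
  have hN : D₀ * D₁ ^ 2 ≠ 0 := mul_ne_zero hD₀.ne_zero (pow_ne_zero 2 hD₁)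
  have hfac {M : ℕ} (hM : M ≠ 0) (q : ℕ) :
      (2 * M).factorization q = (if q = 2 then 1 else 0) + M.factorization q := by
    rw [Nat.factorization_mul two_ne_zero hM, Nat.prime_two.factorization]
    simp [Finsupp.single_apply, eq_comm]
  constructor
  · rintro ⟨M, hM, hNM⟩
    have hM0 : M ≠ 0 := by rintro rfl; exact hN hNM
    refine ⟨fun q hq hqD hq2 hq3 => ?_, ?_⟩
    · have hq1 : q % 3 ≠ 2 := fun hq3' => by
        have := (hodd hq).mp hqD
        rw [hNM, hfac hM0, if_neg hq2, zero_add] at this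
        exact Nat.not_even_iff_odd.mpr this (mem_loeschian_iff.mp hM q hq hq3')
      have hq0 : q % 3 ≠ 0 := fun h =>
        hq3 ((Nat.prime_dvd_prime_iff_eq Nat.prime_three hq).mp (Nat.dvd_of_mod_eq_zero h)).symm
      have := Nat.odd_iff.mp (hq.odd_of_ne_two hq2)
      omega
    · rw [hodd Nat.prime_two, hNM, hfac hM0, if_pos rfl]
      exact (mem_loeschian_iff.mp hM 2 Nat.prime_two rfl).one_add
  · rintro ⟨hD, ⟨E, rfl⟩⟩
    refine ⟨E * D₁ ^ 2, mem_loeschian_iff.mpr fun q hq hq3 => ?_, by ring⟩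
    have hfacq := hfac (by rw [mul_assoc] at hN; exact right_ne_zero_of_mul hN) q
    rw [← mul_assoc] at hfacq
    by_cases hq2 : q = 2
    · subst hq2
      have := (hodd Nat.prime_two).mp (dvd_mul_right 2 E)
      rw [hfacq, if_pos rfl] at this
      simpa [parity_simps] using this
    · have hqD : ¬q ∣ 2 * E := fun hqD => by
        have := hD q hq hqD hq2 (by rintro rfl; norm_num at hq3)
        omega
      rwa [hodd hq, hfacq, if_neg hq2, zero_add, Nat.not_odd_iff_even] at hqD

lemma mem_S_three_iff {n : ℕ} {T : ℤ} :
    T ∈ S 3 n ↔ ∃ M ∈ loeschian, 3 * (n : ℤ) - T ^ 2 = 2 * M := by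
  constructor
  · rintro ⟨x, hsum, hsq⟩
    rw [Fin.sum_univ_three] at hsum hsq
    obtain ⟨M, hM, hMx⟩ := exists_mem_loeschian_eq (x 0 - x 1) (x 1 - x 2)
    exact ⟨M, hM, by rw [hMx]; linear_combination -3 * hsq + (T + x 0 + x 1 + x 2) * hsum⟩
  · rintro ⟨M, hML, hM⟩
    obtain ⟨a, b, hab, c, hc⟩ : ∃ a b : ℤ,
        3 * (n : ℤ) - T ^ 2 = 2 * (a ^ 2 + a * b + b ^ 2) ∧ 3 ∣ T + 2 * a + b := by
      obtain ⟨a, b, hab⟩ := hML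
      -- Swapping `a` and `b` if necessary makes `x₀ = (T + 2a + b) / 3` an integer.
      have hkey : (3 : ℤ) ∣ (T + 2 * a + b) * (T + 2 * b + a) :=
        ⟨T * (a + b) + a * b + n, by linear_combination 2 * hab - hM⟩
      rcases Int.prime_three.dvd_or_dvd hkey with h | h
      · exact ⟨a, b, by rw [hM, hab], h⟩
      · exact ⟨b, a, by rw [hM, ← hab]; ring, h⟩
    refine ⟨![c, c - a, c - a - b], ?_, ?_⟩ <;> simp only [Fin.sum_univ_three, Matrix.cons_val]
    · linear_combination -hc
    · exact mul_left_cancel₀ three_ne_zero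
        (by linear_combination -hab - (T + 3 * c - 2 * a - b) * hc)

lemma three_mul_eq_sq_iff {n : ℕ} (hn : 0 < n) {T : ℤ} :
    3 * (n : ℤ) = T ^ 2 ↔
      ∃ t : ℕ, 0 < t ∧ n = 3 * t ^ 2 ∧ (T = 3 * (t : ℤ) ∨ T = -(3 * (t : ℤ))) := by
  constructor
  · intro h
    obtain ⟨s, rfl⟩ : (3 : ℤ) ∣ T := Int.prime_three.dvd_of_dvd_pow ⟨n, h.symm⟩
    have hns : (n : ℤ) = 3 * (s.natAbs : ℤ) ^ 2 := by rw [Int.natAbs_sq]; linarith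
    refine ⟨s.natAbs, Int.natAbs_pos.mpr ?_, by exact_mod_cast hns, ?_⟩
    · rintro rfl
      exact hn.ne' (by simpa using hns)
    · rcases Int.natAbs_eq s with h | h
      · exact .inl (by rw [← h])
      · exact .inr (by rw [← neg_eq_iff_eq_neg.mpr h]; ring)
  · rintro ⟨t, -, rfl, rfl | rfl⟩ <;> push_cast <;> ring

lemma three_dvd_of_three_mul_sub_sq_eq_mul_sq {n T D₀ D₁ : ℤ} (hD : 3 * n - T ^ 2 = D₀ * D₁ ^ 2)
    (hT : 3 ∣ T) (hn : ¬3 ∣ n) : 3 ∣ D₀ := by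
  obtain ⟨s, rfl⟩ := hT
  by_contra h
  obtain ⟨e, rfl⟩ : 3 ∣ D₁ := Int.prime_three.dvd_of_dvd_pow
    ((Int.prime_three.dvd_or_dvd
      (show 3 ∣ D₀ * D₁ ^ 2 from ⟨n - 3 * s ^ 2, by linear_combination -hD⟩)).resolve_left h)
  exact hn ⟨D₀ * e ^ 2 + s ^ 2, mul_left_cancel₀ three_ne_zero (by linear_combination hD)⟩

lemma intCast_zmod_three_ne_one_of_three_mul_sub_sq_eq_mul_sq {n T D₀ D₁ : ℤ}
    (hD : 3 * n - T ^ 2 = D₀ * D₁ ^ 2) (hT : ¬3 ∣ T) : (D₀ : ZMod 3) ≠ 1 := by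
  intro h1
  have h := congrArg (Int.cast : ℤ → ZMod 3) hD
  push_cast at h
  rw [h1, show (3 : ZMod 3) = 0 from rfl, zero_mul, zero_sub, one_mul] at h
  have hT' : (T : ZMod 3) ≠ 0 := fun h0 =>
    hT (by exact_mod_cast (ZMod.intCast_zmod_eq_zero_iff_dvd T 3).mp h0)
  generalize (T : ZMod 3) = x at h hT'
  generalize (D₁ : ZMod 3) = y at h
  revert x y
  decide

lemma ZMod.natCast_eq_one_of_forall_prime_dvd {k m : ℕ} (hm : m ≠ 0)
    (h : ∀ p : ℕ, p.Prime → p ∣ m → (p : ZMod k) = 1) : (m : ZMod k) = 1 := by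
  induction m using induction_on_primes with
  | zero => exact absurd rfl hm
  | one => exact Nat.cast_one
  | prime_mul p a hp ih =>
    rw [Nat.cast_mul, h p hp (dvd_mul_right p a), one_mul]
    exact ih (right_ne_zero_of_mul hm) fun q hq hqa => h q hq (dvd_mul_of_dvd_right hqa p)

lemma two_dvd_of_three_mul_sub_sq_eq_mul_sq {n : ℕ} {T : ℤ} {D₀ D₁ : ℕ} (hD₀ : D₀ ≠ 0)
    (hD : 3 * (n : ℤ) - T ^ 2 = D₀ * D₁ ^ 2)
    (ha : ∀ q : ℕ, q.Prime → q ∣ D₀ → q ≠ 2 → q ≠ 3 → q % 6 = 1)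
    (hb : (3 ∣ D₀ ∨ ((3 : ℤ) ∣ T ∧ (3 : ℤ) ∣ (n : ℤ))) → 2 ∣ D₀) : 2 ∣ D₀ := by
  by_contra h2
  have h3 : ¬3 ∣ D₀ := fun h => h2 (hb (.inl h))
  by_cases hT : (3 : ℤ) ∣ T
  · have hn : ¬(3 : ℤ) ∣ n := fun h => h2 (hb (.inr ⟨hT, h⟩))
    exact h3 (Int.natCast_dvd_natCast.mp (three_dvd_of_three_mul_sub_sq_eq_mul_sq hD hT hn))
  · refine intCast_zmod_three_ne_one_of_three_mul_sub_sq_eq_mul_sq hD hT ?_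
    rw [Int.cast_natCast]
    refine ZMod.natCast_eq_one_of_forall_prime_dvd hD₀ fun q hq hqD => ?_
    have := ha q hq hqD (by rintro rfl; exact h2 hqD) (by rintro rfl; exact h3 hqD)
    rw [← ZMod.natCast_mod, show q % 3 = 1 by omega, Nat.cast_one]

lemma mem_S_three_iff_of_eq_mul_sq {n : ℕ} {T : ℤ} {D₀ D₁ : ℕ} (hD₀ : Squarefree D₀)
    (hD₁ : D₁ ≠ 0) (hD : 3 * (n : ℤ) - T ^ 2 = D₀ * D₁ ^ 2) :
    T ∈ S 3 n ↔ (∀ q : ℕ, q.Prime → q ∣ D₀ → q ≠ 2 → q ≠ 3 → q % 6 = 1) ∧ 2 ∣ D₀ := by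
  rw [mem_S_three_iff, hD, ← exists_mem_loeschian_mul_sq_eq_two_mul_iff hD₀ hD₁]
  norm_cast

theorem stmt9 (n : ℕ) (hn : 0 < n) (T : ℤ) :
    T ∈ S 3 n ↔
      ((∃ t : ℕ, 0 < t ∧ n = 3 * t ^ 2 ∧ (T = 3 * (t : ℤ) ∨ T = -(3 * (t : ℤ)))) ∨
       (0 < 3 * (n : ℤ) - T ^ 2 ∧
        ∀ D₀ D₁ : ℕ, 0 < D₀ → 0 < D₁ → Squarefree D₀ →
          3 * (n : ℤ) - T ^ 2 = (D₀ : ℤ) * (D₁ : ℤ) ^ 2 →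
          ((∀ q : ℕ, q.Prime → q ∣ D₀ → q ≠ 2 → q ≠ 3 → q % 6 = 1) ∧
           ((3 ∣ D₀ ∨ ((3 : ℤ) ∣ T ∧ (3 : ℤ) ∣ (n : ℤ))) → 2 ∣ D₀)))) := by
  constructor
  · intro hT
    obtain ⟨M, -, hM⟩ := mem_S_three_iff.mp hT
    rcases M.eq_zero_or_pos with rfl | hM0
    · exact .inl ((three_mul_eq_sq_iff hn).mp (by push_cast at hM; linarith))
    · have : (0 : ℤ) < M := by exact_mod_cast hM0
      refine .inr ⟨by linarith, fun D₀ D₁ _ hD₁ hD₀ hD => ?_⟩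
      obtain ⟨ha, h2⟩ := (mem_S_three_iff_of_eq_mul_sq hD₀ hD₁.ne' hD).mp hT
      exact ⟨ha, fun _ => h2⟩
  · rintro (hI | ⟨hN, hD⟩)
    · have h0 := (three_mul_eq_sq_iff hn).mpr hI
      exact mem_S_three_iff.mpr ⟨0, ⟨0, 0, by simp⟩, by push_cast; linarith⟩
    · obtain ⟨N, hN'⟩ := Int.eq_ofNat_of_zero_le hN.le
      obtain ⟨D₀, D₁, hD₀, hD₁, hND, hsf⟩ := Nat.sq_mul_squarefree_of_pos (n := N) (by omega)
      have hD' : 3 * (n : ℤ) - T ^ 2 = D₀ * D₁ ^ 2 := by rw [hN', ← hND]; push_cast; ring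
      obtain ⟨ha, hb⟩ := hD D₀ D₁ hD₀ hD₁ hsf hD'
      exact (mem_S_three_iff_of_eq_mul_sq hsf hD₁.ne' hD').mpr
        ⟨ha, two_dvd_of_three_mul_sub_sq_eq_mul_sq hD₀.ne' hD' ha hb⟩
end

section
/- Let n be a positive integer and T an integer. Then T ∈ 𝒮_4(n) if and only if T ≡ n (mod 2) and 4n − T² ∈ sos(3). In particular, 𝒮'_4(n) = { T ∈ 𝒯_4(n) : 4n − T² ∈ sos(3) }. -/
/-!
The Hadamard transform `(a, b, c, d) ↦ (a+b+c+d, a+b-c-d, a-b+c-d, a-b-c+d)` multiplies the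
sum of squares by `4`. Applied to a representation `n = a² + b² + c² + d²` with `T = a+b+c+d`,
it writes `4n - T²` as a sum of three squares. Conversely, from `4n = T² + p² + q² + r²` with
`T ≡ n (mod 2)` the residues of squares modulo `8` force `T, p, q, r` to share a parity and,
after replacing `p` by `-p` if necessary, `4 ∣ T + p + q + r`; then the inverse transform
(division by `4`) has integral entries and recovers `a, b, c, d`.
-/

lemma hadamard_sum_sq {R : Type*} [CommRing R] (a b c d : R) :
    (a + b + c + d) ^ 2 + (a + b - c - d) ^ 2 + (a - b + c - d) ^ 2 + (a - b - c + d) ^ 2 =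
      4 * (a ^ 2 + b ^ 2 + c ^ 2 + d ^ 2) := by
  ring

lemma sq_emod_eight (z : ℤ) :
    (z % 4 = 0 ∧ z ^ 2 % 8 = 0) ∨ (z % 4 = 1 ∧ z ^ 2 % 8 = 1) ∨
      (z % 4 = 2 ∧ z ^ 2 % 8 = 4) ∨ (z % 4 = 3 ∧ z ^ 2 % 8 = 1) := by
  have h : z % 8 = 0 ∨ z % 8 = 1 ∨ z % 8 = 2 ∨ z % 8 = 3 ∨ z % 8 = 4 ∨ z % 8 = 5 ∨
      z % 8 = 6 ∨ z % 8 = 7 := by omega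
  have hz : z % 4 = z % 8 % 4 := (Int.emod_emod_of_dvd z (by norm_num)).symm
  rw [pow_two, Int.mul_emod, hz]
  rcases h with h | h | h | h | h | h | h | h <;> simp [h]

lemma emod_two_eq_of_mem_S {m n : ℕ} {T : ℤ} (hT : T ∈ S m n) : T % 2 = (n : ℤ) % 2 := by
  obtain ⟨x, rfl, hx⟩ := hT
  have h : Even ((n : ℤ) - ∑ i, x i) := by
    rw [← hx, ← Finset.sum_sub_distrib]
    exact Finset.even_sum _ fun i _ => by simpa [sq, mul_sub] using (x i).even_mul_pred_self
  have := h.two_dvd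
  omega

lemma four_mul_sub_sq_mem_sos_three {n : ℕ} {T : ℤ} (hT : T ∈ S 4 n) :
    4 * (n : ℤ) - T ^ 2 ∈ sos 3 := by
  obtain ⟨x, rfl, hx⟩ := hT
  refine ⟨![x 0 + x 1 - x 2 - x 3, x 0 - x 1 + x 2 - x 3, x 0 - x 1 - x 2 + x 3], ?_⟩
  rw [← hx]
  simp only [Fin.sum_univ_four, Fin.sum_univ_three, Matrix.cons_val_zero, Matrix.cons_val_one,
    Matrix.cons_val_two, Matrix.head_cons, Matrix.tail_cons]
  linear_combination hadamard_sum_sq (x 0) (x 1) (x 2) (x 3)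

lemma mem_S_four_of_sum_sq {n : ℕ} {T p q r : ℤ}
    (h : T ^ 2 + p ^ 2 + q ^ 2 + r ^ 2 = 4 * (n : ℤ))
    (h4 : 4 ∣ T + p + q + r) (hq : p % 2 = q % 2) (hr : p % 2 = r % 2) : T ∈ S 4 n := by
  obtain ⟨a, b, c, d, hTa, hpa, hqa, hra⟩ :
      ∃ a b c d : ℤ, a + b + c + d = T ∧ a + b - c - d = p ∧
        a - b + c - d = q ∧ a - b - c + d = r :=
    ⟨(T + p + q + r) / 4, (T + p - q - r) / 4, (T - p + q - r) / 4, (T - p - q + r) / 4,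
      by omega, by omega, by omega, by omega⟩
  refine ⟨![a, b, c, d], by simp [Fin.sum_univ_four, hTa], ?_⟩
  rw [← hTa, ← hpa, ← hqa, ← hra, hadamard_sum_sq] at h
  simpa [Fin.sum_univ_four] using h

lemma parity_of_sum_sq_eq_four_mul {n : ℕ} {T p q r : ℤ} (hT : T % 2 = (n : ℤ) % 2)
    (h : T ^ 2 + p ^ 2 + q ^ 2 + r ^ 2 = 4 * (n : ℤ)) :
    p % 2 = q % 2 ∧ p % 2 = r % 2 ∧ (4 ∣ T + p + q + r ∨ 4 ∣ T + -p + q + r) := by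
  have := sq_emod_eight T
  have := sq_emod_eight p
  have := sq_emod_eight q
  have := sq_emod_eight r
  omega

lemma mem_S_four_iff {n : ℕ} {T : ℤ} :
    T ∈ S 4 n ↔ T % 2 = (n : ℤ) % 2 ∧ 4 * (n : ℤ) - T ^ 2 ∈ sos 3 := by
  refine ⟨fun hT => ⟨emod_two_eq_of_mem_S hT, four_mul_sub_sq_mem_sos_three hT⟩, ?_⟩
  rintro ⟨hpar, y, hy⟩
  have h : T ^ 2 + y 0 ^ 2 + y 1 ^ 2 + y 2 ^ 2 = 4 * (n : ℤ) := by
    rw [Fin.sum_univ_three] at hy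
    linarith
  obtain ⟨hq, hr, h4 | h4⟩ := parity_of_sum_sq_eq_four_mul hpar h
  · exact mem_S_four_of_sum_sq h h4 hq hr
  · exact mem_S_four_of_sum_sq (by linear_combination h) h4 (by omega) (by omega)

theorem stmt10_general (n : ℕ) :
    (∀ T : ℤ, T ∈ S 4 n ↔
      (T % 2 = (n : ℤ) % 2 ∧ (4 * (n : ℤ) - T ^ 2) ∈ sos 3)) ∧
    ({T : ℤ | T ∈ S 4 n ∧ T ^ 2 < 4 * (n : ℤ)} =
      {T : ℤ | (T % 2 = (n : ℤ) % 2 ∧ T ^ 2 < 4 * (n : ℤ)) ∧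
        (4 * (n : ℤ) - T ^ 2) ∈ sos 3}) := by
  exact ⟨fun T => mem_S_four_iff,
    Set.ext fun T => (and_congr_left' mem_S_four_iff).trans and_right_comm⟩

theorem stmt10 (n : ℕ) (hn : 0 < n) :
    (∀ T : ℤ, T ∈ S 4 n ↔
      (T % 2 = (n : ℤ) % 2 ∧ (4 * (n : ℤ) - T ^ 2) ∈ sos 3)) ∧
    ({T : ℤ | T ∈ S 4 n ∧ T ^ 2 < 4 * (n : ℤ)} =
      {T : ℤ | (T % 2 = (n : ℤ) % 2 ∧ T ^ 2 < 4 * (n : ℤ)) ∧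
        (4 * (n : ℤ) - T ^ 2) ∈ sos 3}) :=
  stmt10_general n
end

section
/- Let m, n be positive integers and T an integer. If T ∈ 𝒮_m(n) and T² < mn, then T² ≤ m(n−1) + 1. -/
theorem stmt13 (m n : ℕ) (hm : 0 < m) (hn : 0 < n) (T : ℤ)
    (hT : T ∈ S m n) (hlt : T ^ 2 < (m : ℤ) * n) :
    T ^ 2 ≤ (m : ℤ) * ((n : ℤ) - 1) + 1 := by
  obtain ⟨x, hxs, hxq⟩ := hT
  set i0 : Fin m := ⟨0, hm⟩
  set v := x i0 with hv
  -- key identity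
  have key : ∑ i, ∑ j, (x i - x j)^2 = 2 * ((m:ℤ)*n - T^2) := by
    have h1 : ∀ i : Fin m, ∑ j, (x i - x j)^2 = (m:ℤ) * x i^2 + (n:ℤ) - 2 * x i * T := by
      intro i
      have : ∀ j : Fin m, (x i - x j)^2 = x i^2 + (x j)^2 - 2 * x i * x j := by
        intro j; ring
      simp_rw [this]
      rw [Finset.sum_sub_distrib, Finset.sum_add_distrib, Finset.sum_const,
        ← Finset.mul_sum]
      simp only [Finset.card_univ, Fintype.card_fin, nsmul_eq_mul, hxs, hxq]
    simp_rw [h1]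
    rw [Finset.sum_sub_distrib, Finset.sum_add_distrib, Finset.sum_const,
      ← Finset.mul_sum]
    rw [show (∑ i : Fin m, 2 * x i * T) = 2 * T * ∑ i, x i by
      rw [Finset.mul_sum]; exact Finset.sum_congr rfl (fun i _ => by ring)]
    simp only [Finset.card_univ, Fintype.card_fin, nsmul_eq_mul, hxs, hxq]
    ring
  by_cases hall : ∀ i, x i = v
  · exfalso
    have hT' : T = (m:ℤ) * v := by
      rw [← hxs]
      calc ∑ i, x i = ∑ _i : Fin m, v := Finset.sum_congr rfl (fun i _ => hall i)
        _ = (m:ℤ) * v := by simp [mul_comm]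
    have hn' : (n:ℤ) = (m:ℤ) * v^2 := by
      rw [← hxq]
      calc ∑ i, (x i)^2 = ∑ _i : Fin m, v^2 := Finset.sum_congr rfl (fun i _ => by rw [hall i])
        _ = (m:ℤ) * v^2 := by simp [mul_comm]
    rw [hT', hn'] at hlt
    nlinarith
  · push_neg at hall
    obtain ⟨j0, hj0⟩ := hall
    set A := Finset.univ.filter (fun i : Fin m => x i = v) with hA
    set B := Finset.univ.filter (fun i : Fin m => ¬ x i = v) with hB
    have hcard : A.card + B.card = m := by
      rw [hA, hB, Finset.card_filter_add_card_filter_not]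
      simp
    have hA1 : 1 ≤ A.card := Finset.card_pos.mpr ⟨i0, by simp [hA, hv]⟩
    have hB1 : 1 ≤ B.card := Finset.card_pos.mpr ⟨j0, by simp [hB, hj0]⟩
    -- each cross term ≥ 1
    have hterm : ∀ i ∈ A, ∀ j ∈ B, (1:ℤ) ≤ (x i - x j)^2 := by
      intro i hi j hj
      have hi' : x i = v := by simpa [hA] using hi
      have hj' : x j ≠ v := by simpa [hB] using hj
      have hne : x i - x j ≠ 0 := by
        intro h; apply hj'; rw [← hi']; linarith [sub_eq_zero.mp h]
      have := Int.one_le_abs hne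
      calc (1:ℤ) = 1^2 := by ring
        _ ≤ |x i - x j|^2 := by nlinarith [abs_nonneg (x i - x j)]
        _ = (x i - x j)^2 := sq_abs _
    have hnn : ∀ i j : Fin m, (0:ℤ) ≤ (x i - x j)^2 := fun i j => sq_nonneg _
    -- lower bound the double sum
    have hsplit : ∑ i, ∑ j, (x i - x j)^2
        = ∑ i ∈ A, ∑ j, (x i - x j)^2 + ∑ i ∈ B, ∑ j, (x i - x j)^2 := by
      rw [hA, hB, Finset.sum_filter_add_sum_filter_not]
    have hinner1 : ∀ i ∈ A, (B.card : ℤ) ≤ ∑ j, (x i - x j)^2 := by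
      intro i hi
      calc (B.card : ℤ) = ∑ _j ∈ B, (1:ℤ) := by simp
        _ ≤ ∑ j ∈ B, (x i - x j)^2 := Finset.sum_le_sum (fun j hj => hterm i hi j hj)
        _ ≤ ∑ j, (x i - x j)^2 :=
            Finset.sum_le_sum_of_subset_of_nonneg (Finset.subset_univ B)
              (fun j _ _ => hnn i j)
    have hinner2 : ∀ i ∈ B, (A.card : ℤ) ≤ ∑ j, (x i - x j)^2 := by
      intro i hi
      calc (A.card : ℤ) = ∑ _j ∈ A, (1:ℤ) := by simp
        _ ≤ ∑ j ∈ A, (x i - x j)^2 := Finset.sum_le_sum (fun j hj => by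
            have := hterm j hj i hi
            nlinarith [this])
        _ ≤ ∑ j, (x i - x j)^2 :=
            Finset.sum_le_sum_of_subset_of_nonneg (Finset.subset_univ A)
              (fun j _ _ => hnn i j)
    have hlow : (A.card : ℤ) * B.card + (B.card : ℤ) * A.card ≤ ∑ i, ∑ j, (x i - x j)^2 := by
      rw [hsplit]
      have h1 : (A.card : ℤ) * B.card ≤ ∑ i ∈ A, ∑ j, (x i - x j)^2 := by
        calc (A.card : ℤ) * B.card = ∑ _i ∈ A, (B.card : ℤ) := by simp [mul_comm]
          _ ≤ _ := Finset.sum_le_sum hinner1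
      have h2 : (B.card : ℤ) * A.card ≤ ∑ i ∈ B, ∑ j, (x i - x j)^2 := by
        calc (B.card : ℤ) * A.card = ∑ _i ∈ B, (A.card : ℤ) := by simp [mul_comm]
          _ ≤ _ := Finset.sum_le_sum hinner2
      linarith
    rw [key] at hlow
    have hk : (A.card : ℤ) + (B.card : ℤ) = m := by exact_mod_cast hcard
    have hA1' : (1:ℤ) ≤ A.card := by exact_mod_cast hA1
    have hB1' : (1:ℤ) ≤ B.card := by exact_mod_cast hB1
    nlinarith [mul_nonneg (sub_nonneg.mpr hA1') (sub_nonneg.mpr hB1')]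
end

section
/- Let m, n, ℓ, r be positive integers and s a nonnegative integer. Suppose that m > ℓ, mn > r, and 4·((m−ℓ)·r − m·s) > ℓ·m². Suppose moreover that for every integer k and every positive integer n' with n' = n − ℓ·k², one has { T' ∈ ℤ : T' ≡ n' (mod 2) and T'² < (m−ℓ)·n' − s } ⊆ 𝒮_{m−ℓ}(n'). Then { T ∈ ℤ : T ≡ n (mod 2) and T² ≤ mn − r } ⊆ 𝒮_m(n). -/
theorem add_mem_S {a b n₁ n₂ : ℕ} {T₁ T₂ : ℤ} (h₁ : T₁ ∈ S a n₁) (h₂ : T₂ ∈ S b n₂) :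
    T₁ + T₂ ∈ S (a + b) (n₁ + n₂) := by
  obtain ⟨x, hx_sum, hx_sq⟩ := h₁
  obtain ⟨y, hy_sum, hy_sq⟩ := h₂
  refine ⟨Fin.append x y, ?_, ?_⟩
  · simp only [Fin.sum_univ_add, Fin.append_left, Fin.append_right, hx_sum, hy_sum]
  · simp only [Fin.sum_univ_add, Fin.append_left, Fin.append_right, hx_sq, hy_sq]
    push_cast; rfl

theorem mul_mem_S_mul_sq (ℓ : ℕ) (k : ℤ) : ℓ * k ∈ S ℓ (ℓ * k.natAbs ^ 2) :=
  ⟨fun _ ↦ k, by simp, by simp⟩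

theorem mem_S_of_sub_mem_S {m ℓ n n' : ℕ} {T k : ℤ} (hℓm : ℓ ≤ m)
    (hT : T - ℓ * k ∈ S (m - ℓ) n') (hn : (n : ℤ) = n' + ℓ * k ^ 2) : T ∈ S m n := by
  have h := add_mem_S (mul_mem_S_mul_sq ℓ k) hT
  rw [Nat.add_sub_cancel' hℓm, add_sub_cancel] at h
  convert h using 2
  zify
  rw [sq_abs, hn]
  ring

theorem exists_four_mul_sq_mul_sub_le_sq {d : ℤ} (hd : 0 < d) (T : ℤ) :
    ∃ k : ℤ, 4 * (d * k - T) ^ 2 ≤ d ^ 2 := by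
  refine ⟨(2 * T + d) / (2 * d), ?_⟩
  have h_div := Int.mul_ediv_add_emod (2 * T + d) (2 * d)
  have h_nonneg := Int.emod_nonneg (2 * T + d) (by positivity : 2 * d ≠ 0)
  have h_lt := Int.emod_lt_of_pos (2 * T + d) (by positivity : 0 < 2 * d)
  nlinarith

theorem sq_sub_mul_lt {m ℓ n r s T k : ℤ} (hℓ : 0 ≤ ℓ) (hℓm : ℓ < m)
    (hT : T ^ 2 ≤ m * n - r) (hk : 4 * (m * k - T) ^ 2 ≤ m ^ 2)
    (h : ℓ * m ^ 2 < 4 * ((m - ℓ) * r - m * s)) :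
    (T - ℓ * k) ^ 2 < (m - ℓ) * (n - ℓ * k ^ 2) - s := by
  have key : 0 < 4 * m * ((m - ℓ) * (n - ℓ * k ^ 2) - s - (T - ℓ * k) ^ 2) := by
    have h_id : 4 * m * ((m - ℓ) * (n - ℓ * k ^ 2) - s - (T - ℓ * k) ^ 2)
        = 4 * (m - ℓ) * (m * n - T ^ 2) - 4 * m * s - ℓ * (4 * (m * k - T) ^ 2) := by ring
    rw [h_id]
    nlinarith [mul_le_mul_of_nonneg_left hT (by linarith : 0 ≤ m - ℓ),
      mul_le_mul_of_nonneg_left hk hℓ]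
  linarith [pos_of_mul_pos_right key (by linarith)]

theorem sub_mul_emod_two_eq {T n : ℤ} (h : T % 2 = n % 2) (ℓ k : ℤ) :
    (T - ℓ * k) % 2 = (n - ℓ * k ^ 2) % 2 := by
  obtain ⟨c, hc⟩ := Int.even_mul_pred_self k
  have : ℓ * k ^ 2 = ℓ * k + 2 * (ℓ * c) := by linear_combination ℓ * hc
  omega

theorem stmt14_general (m n ℓ r : ℕ) (s : ℕ)
    (h1 : ℓ < m)
    (h3 : (ℓ : ℤ) * (m : ℤ) ^ 2 < 4 * (((m : ℤ) - (ℓ : ℤ)) * r - (m : ℤ) * s))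
    (h4 : ∀ k : ℤ, ∀ n' : ℕ, 0 < n' → (n' : ℤ) = (n : ℤ) - (ℓ : ℤ) * k ^ 2 →
      ∀ T' : ℤ, T' % 2 = (n' : ℤ) % 2 →
        T' ^ 2 < ((m : ℤ) - (ℓ : ℤ)) * (n' : ℤ) - (s : ℤ) → T' ∈ S (m - ℓ) n') :
    ∀ T : ℤ, T % 2 = (n : ℤ) % 2 → T ^ 2 ≤ (m : ℤ) * n - (r : ℤ) → T ∈ S m n := by
  intro T hpar hT
  have h1' : (ℓ : ℤ) < m := by exact_mod_cast h1
  obtain ⟨k, hk⟩ := exists_four_mul_sq_mul_sub_le_sq (by omega : (0 : ℤ) < m) T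
  have hlt := sq_sub_mul_lt (by positivity) h1' hT hk h3
  have hn' : 0 < (n : ℤ) - ℓ * k ^ 2 := by
    refine pos_of_mul_pos_right ?_ (by omega : (0 : ℤ) ≤ m - ℓ)
    nlinarith [sq_nonneg (T - ℓ * k)]
  lift (n : ℤ) - ℓ * k ^ 2 to ℕ using hn'.le with n' hn'_eq
  refine mem_S_of_sub_mem_S h1.le (h4 k n' (by omega) hn'_eq _ ?_ hlt) (by omega)
  rw [hn'_eq]
  exact sub_mul_emod_two_eq hpar ℓ k

theorem stmt14 (m n ℓ r : ℕ) (s : ℕ)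
    (hm : 0 < m) (hn : 0 < n) (hℓ : 0 < ℓ) (hr : 0 < r)
    (h1 : ℓ < m) (h2 : (r : ℤ) < (m : ℤ) * n)
    (h3 : (ℓ : ℤ) * (m : ℤ) ^ 2 < 4 * (((m : ℤ) - (ℓ : ℤ)) * r - (m : ℤ) * s))
    (h4 : ∀ k : ℤ, ∀ n' : ℕ, 0 < n' → (n' : ℤ) = (n : ℤ) - (ℓ : ℤ) * k ^ 2 →
      ∀ T' : ℤ, T' % 2 = (n' : ℤ) % 2 →
        T' ^ 2 < ((m : ℤ) - (ℓ : ℤ)) * (n' : ℤ) - (s : ℤ) → T' ∈ S (m - ℓ) n') :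
    ∀ T : ℤ, T % 2 = (n : ℤ) % 2 → T ^ 2 ≤ (m : ℤ) * n - (r : ℤ) → T ∈ S m n :=
  stmt14_general m n ℓ r s h1 h3 h4
end

section
/- For every positive integer n, 𝒮_8(n) is full; that is, every integer T with T ≡ n (mod 2) and T² < 8n satisfies T ∈ 𝒮_8(n). -/
/-!
Pair the eight coordinates as `(yᵢ + aᵢ, yᵢ - aᵢ)`: the pair sums `2yᵢ` are fixed while the
square sums `2yᵢ² + 2aᵢ²` absorb any surplus. For `T = 2t`, `n = 2k`, splitting `t` into four
nearly equal parts `yᵢ` gives `∑ yᵢ² ≤ k` as soon as `T² < 8n`, and Lagrange's theorem writes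
`k - ∑ yᵢ²` as `∑ aᵢ²`. For `T` and `n` odd the last pair is `(y₄ + d, y₄ + 1 - d)`, with square
sum `2y₄² + 2y₄ + 1 + 2d(d - 1)`; the deficit is then of the form `a² + b² + c² + d(d - 1)`,
which every `N ≥ 0` is, since `4N + 1` is a sum of four squares exactly one of which is odd.
-/

lemma Int.exists_sq_add_sq_add_sq_add_sq {N : ℤ} (hN : 0 ≤ N) :
    ∃ a b c d : ℤ, a ^ 2 + b ^ 2 + c ^ 2 + d ^ 2 = N := by
  obtain ⟨a, b, c, d, h⟩ := Nat.sum_four_squares N.toNat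
  exact ⟨a, b, c, d, by rw [← Int.toNat_of_nonneg hN]; exact_mod_cast h⟩

lemma Int.four_dvd_sq_of_four_dvd_sq_add_sq_add_sq {x y z : ℤ}
    (h : 4 ∣ x ^ 2 + y ^ 2 + z ^ 2) : 4 ∣ x ^ 2 ∧ 4 ∣ y ^ 2 ∧ 4 ∣ z ^ 2 := by
  have hmod : ∀ a b c : ZMod 4, a ^ 2 + b ^ 2 + c ^ 2 = 0 → a ^ 2 = 0 ∧ b ^ 2 = 0 ∧ c ^ 2 = 0 := by
    decide
  have hcast (m : ℤ) : 4 ∣ m ↔ (m : ZMod 4) = 0 := (ZMod.intCast_zmod_eq_zero_iff_dvd m 4).symm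
  simp only [hcast, Int.cast_add, Int.cast_pow] at h ⊢
  exact hmod _ _ _ h

lemma Int.two_dvd_of_four_dvd_sq {x : ℤ} (h : 4 ∣ x ^ 2) : 2 ∣ x :=
  Int.prime_two.dvd_of_dvd_pow (dvd_trans ⟨2, rfl⟩ h)

lemma Int.exists_sq_add_sq_add_sq_add_mul_sub_one_of_odd (w x y z : ℤ) {N : ℤ}
    (h : w ^ 2 + x ^ 2 + y ^ 2 + z ^ 2 = 4 * N + 1) (hz : Odd z) :
    ∃ a b c d : ℤ, a ^ 2 + b ^ 2 + c ^ 2 + d * (d - 1) = N := by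
  obtain ⟨d, rfl⟩ : ∃ d, z = 2 * d - 1 := by obtain ⟨k, hk⟩ := hz; exact ⟨k + 1, by omega⟩
  obtain ⟨hw, hx, hy⟩ := four_dvd_sq_of_four_dvd_sq_add_sq_add_sq
    (⟨N - d * (d - 1), by linear_combination h⟩ : 4 ∣ w ^ 2 + x ^ 2 + y ^ 2)
  obtain ⟨a, rfl⟩ := two_dvd_of_four_dvd_sq hw
  obtain ⟨b, rfl⟩ := two_dvd_of_four_dvd_sq hx
  obtain ⟨c, rfl⟩ := two_dvd_of_four_dvd_sq hy
  exact ⟨a, b, c, d, by linarith⟩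

lemma Int.exists_sq_add_sq_add_sq_add_mul_sub_one {N : ℤ} (hN : 0 ≤ N) :
    ∃ a b c d : ℤ, a ^ 2 + b ^ 2 + c ^ 2 + d * (d - 1) = N := by
  obtain ⟨w, x, y, z, h'⟩ := Int.exists_sq_add_sq_add_sq_add_sq (by omega : 0 ≤ 4 * N + 1)
  by_cases hz : Odd z
  · exact exists_sq_add_sq_add_sq_add_mul_sub_one_of_odd w x y z h' hz
  by_cases hy : Odd y
  · exact exists_sq_add_sq_add_sq_add_mul_sub_one_of_odd w x z y (by linear_combination h') hy
  by_cases hx : Odd x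
  · exact exists_sq_add_sq_add_sq_add_mul_sub_one_of_odd w y z x (by linear_combination h') hx
  have hw : Odd w := by
    by_contra hw
    rw [Int.not_odd_iff_even] at hw hx hy hz
    have hsum := (((hw.pow_of_ne_zero two_ne_zero).add (hx.pow_of_ne_zero two_ne_zero)).add
      (hy.pow_of_ne_zero two_ne_zero)).add (hz.pow_of_ne_zero two_ne_zero)
    rw [h', Int.even_iff] at hsum
    omega
  exact exists_sq_add_sq_add_sq_add_mul_sub_one_of_odd x y z w (by linear_combination h') hw

-- `t = 4q + r` is split into `r` parts `q + 1` and `4 - r` parts `q`.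
lemma Int.exists_balanced_four_summands (t : ℤ) :
    ∃ y₁ y₂ y₃ y₄ : ℤ, y₁ + y₂ + y₃ + y₄ = t ∧
      4 * (y₁ ^ 2 + y₂ ^ 2 + y₃ ^ 2 + y₄ ^ 2) ≤ t ^ 2 + 4 ∧
      4 * (y₁ ^ 2 + y₂ ^ 2 + y₃ ^ 2 + y₄ ^ 2 + y₄) ≤ t ^ 2 + t + 2 := by
  obtain ⟨q, r, rfl, hr₀, hr₄⟩ : ∃ q r, t = 4 * q + r ∧ 0 ≤ r ∧ r < 4 :=
    ⟨t / 4, t % 4, by omega, by omega, by omega⟩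
  interval_cases r
  · exact ⟨q, q, q, q, by ring, by nlinarith, by nlinarith⟩
  · exact ⟨q + 1, q, q, q, by ring, by nlinarith, by nlinarith⟩
  · exact ⟨q + 1, q + 1, q, q, by ring, by nlinarith, by nlinarith⟩
  · exact ⟨q + 1, q + 1, q + 1, q, by ring, by nlinarith, by nlinarith⟩

lemma two_mul_add_mem_S_eight {n : ℕ} {k y₁ y₂ y₃ y₄ : ℤ} (hn : (n : ℤ) = 2 * k)
    (hy : y₁ ^ 2 + y₂ ^ 2 + y₃ ^ 2 + y₄ ^ 2 ≤ k) :
    2 * (y₁ + y₂ + y₃ + y₄) ∈ S 8 n := by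
  obtain ⟨a, b, c, d, habcd⟩ := Int.exists_sq_add_sq_add_sq_add_sq (sub_nonneg.2 hy)
  refine ⟨![y₁ + a, y₁ - a, y₂ + b, y₂ - b, y₃ + c, y₃ - c, y₄ + d, y₄ - d], ?_, ?_⟩ <;>
    simp only [Fin.sum_univ_eight, Matrix.cons_val]
  · ring
  · linear_combination 2 * habcd - hn

lemma two_mul_add_one_mem_S_eight {n : ℕ} {k y₁ y₂ y₃ y₄ : ℤ} (hn : (n : ℤ) = 2 * k + 1)
    (hy : y₁ ^ 2 + y₂ ^ 2 + y₃ ^ 2 + y₄ ^ 2 + y₄ ≤ k) :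
    2 * (y₁ + y₂ + y₃ + y₄) + 1 ∈ S 8 n := by
  obtain ⟨a, b, c, d, habcd⟩ := Int.exists_sq_add_sq_add_sq_add_mul_sub_one (sub_nonneg.2 hy)
  refine ⟨![y₁ + a, y₁ - a, y₂ + b, y₂ - b, y₃ + c, y₃ - c, y₄ + d, y₄ + 1 - d], ?_, ?_⟩ <;>
    simp only [Fin.sum_univ_eight, Matrix.cons_val]
  · ring
  · linear_combination 2 * habcd - hn

lemma sfull_eight (n : ℕ) : Sfull 8 n := by
  intro T hpar hlt
  push_cast at hlt
  rcases Int.even_or_odd' T with ⟨t, rfl | rfl⟩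
  · obtain ⟨k, hk⟩ : ∃ k, (n : ℤ) = 2 * k := ⟨n / 2, by omega⟩
    obtain ⟨y₁, y₂, y₃, y₄, rfl, hy, -⟩ := Int.exists_balanced_four_summands t
    exact two_mul_add_mem_S_eight hk (by nlinarith)
  · obtain ⟨k, hk⟩ : ∃ k, (n : ℤ) = 2 * k + 1 := ⟨n / 2, by omega⟩
    obtain ⟨y₁, y₂, y₃, y₄, rfl, -, hy⟩ := Int.exists_balanced_four_summands t
    exact two_mul_add_one_mem_S_eight hk (by nlinarith)

theorem stmt15_general (n : ℕ) :
    Sfull 8 n ∧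
      ∀ T : ℤ, T % 2 = (n : ℤ) % 2 → T ^ 2 < 8 * (n : ℤ) → T ∈ S 8 n :=
  ⟨sfull_eight n, sfull_eight n⟩

theorem stmt15 (n : ℕ) (hn : 0 < n) :
    Sfull 8 n ∧
      ∀ T : ℤ, T % 2 = (n : ℤ) % 2 → T ^ 2 < 8 * (n : ℤ) → T ∈ S 8 n :=
  stmt15_general n
end

section
/- Let m ∈ {9, 10, 11} and let n be a positive integer with n > m. Then 𝒮'_m(n) = { T ∈ ℤ : T² ≤ m(n−1) + 1 and T ≡ n (mod 2) }. -/
private lemma forward_bound (m n : ℕ) (hm : 2 ≤ m) (x : Fin m → ℤ) (T : ℤ)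
    (hsum : (∑ i, x i) = T) (hsq : (∑ i, (x i) ^ 2) = (n : ℤ))
    (hlt : T ^ 2 < (m : ℤ) * n) : T ^ 2 ≤ (m : ℤ) * ((n : ℤ) - 1) + 1 := by
  have hne : ∃ i j, x i ≠ x j := by
    by_contra h
    push_neg at h
    have i0 : Fin m := ⟨0, by omega⟩
    have h1 : T = (m : ℤ) * x i0 := by
      rw [← hsum, Finset.sum_congr rfl fun k _ => h k i0, Finset.sum_const,
        Finset.card_univ, Fintype.card_fin, nsmul_eq_mul]
    have h2 : (n : ℤ) = (m : ℤ) * (x i0) ^ 2 := by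
      rw [← hsq, Finset.sum_congr rfl fun k _ => congrArg (· ^ 2) (h k i0),
        Finset.sum_const, Finset.card_univ, Fintype.card_fin, nsmul_eq_mul]
    rw [h1, h2] at hlt
    nlinarith [hlt]
  obtain ⟨i, j, hij⟩ := hne
  set c := x i with hc
  set P := Finset.univ.filter (fun k => x k ≠ c) with hP
  have hjP : j ∈ P := Finset.mem_filter.2 ⟨Finset.mem_univ _, fun hxj => hij hxj.symm⟩
  have hiP : i ∉ P := by simp [hP]; exact hc.symm
  have hpge : 1 ≤ P.card := Finset.card_pos.2 ⟨j, hjP⟩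
  have hplt : P.card < m := by
    have : P ⊂ Finset.univ := Finset.ssubset_univ_iff.2 (fun h => hiP (h ▸ Finset.mem_univ i))
    simpa using Finset.card_lt_card this
  have hEexp : (∑ k, (x k - c)^2) = (n:ℤ) - 2*c*T + (m:ℤ)*c^2 := by
    rw [Finset.sum_congr rfl fun k _ => (by ring : (x k - c)^2 = x k^2 - 2*c*x k + c^2),
      Finset.sum_add_distrib, Finset.sum_sub_distrib, ← Finset.mul_sum, hsq, hsum,
      Finset.sum_const, Finset.card_univ, Fintype.card_fin, nsmul_eq_mul]
  have hzero : ∀ k ∈ Finset.univ, k ∉ P → (x k - c) = 0 := by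
    intro k _ hk
    have : x k = c := by simpa [hP] using hk
    simp [this]
  have hEP : (∑ k ∈ P, (x k - c)^2) = ∑ k, (x k - c)^2 :=
    Finset.sum_subset (Finset.subset_univ P) (fun k hk hk' => by rw [hzero k hk hk']; ring)
  have hsP : (∑ k ∈ P, (x k - c)) = T - (m:ℤ)*c := by
    rw [Finset.sum_subset (Finset.subset_univ P) (fun k hk hk' => hzero k hk hk'),
      Finset.sum_sub_distrib, hsum, Finset.sum_const, Finset.card_univ, Fintype.card_fin,
      nsmul_eq_mul]
  have hCS : (T - (m:ℤ)*c)^2 ≤ (P.card : ℤ) * ∑ k ∈ P, (x k - c)^2 := by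
    rw [← hsP]
    exact sq_sum_le_card_mul_sum_sq
  have hlb : (P.card : ℤ) ≤ ∑ k ∈ P, (x k - c)^2 := by
    have := Finset.card_nsmul_le_sum P (fun k => (x k - c)^2) 1 (fun k hk => by
      have hxk : x k - c ≠ 0 := sub_ne_zero.2 (Finset.mem_filter.1 hk).2
      have h0 : 0 < (x k - c)^2 := by positivity
      show (1:ℤ) ≤ (x k - c)^2
      linarith)
    simpa using this
  set p := (P.card : ℤ) with hp
  have hpge' : (1:ℤ) ≤ p := by
    show (1:ℤ) ≤ (P.card : ℤ); exact_mod_cast hpge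
  have hplt' : p ≤ (m:ℤ) - 1 := by
    have h5 : (P.card : ℤ) < (m:ℤ) := by exact_mod_cast hplt
    show (P.card : ℤ) ≤ (m:ℤ) - 1
    omega
  have hEid : (m:ℤ)*(n:ℤ) - T^2 = (m:ℤ) * (∑ k ∈ P, (x k - c)^2) - (T - (m:ℤ)*c)^2 := by
    rw [hEP, hEexp]; ring
  have h4 : (m:ℤ) - 1 ≤ ((m:ℤ) - p) * p := by
    nlinarith [mul_nonneg (by linarith : (0:ℤ) ≤ p - 1) (by linarith : (0:ℤ) ≤ (m:ℤ) - 1 - p)]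
  have h3 : (m:ℤ) * (∑ k ∈ P, (x k - c)^2) - p * (∑ k ∈ P, (x k - c)^2) ≥ ((m:ℤ) - p) * p := by
    have := mul_le_mul_of_nonneg_left hlb (by linarith : (0:ℤ) ≤ (m:ℤ) - p)
    nlinarith [this]
  linarith [hEid, hCS, h3, h4]

private lemma four_sq_int (B : ℤ) (hB : 0 ≤ B) :
    ∃ b0 b1 b2 b3 : ℤ, b0^2 + b1^2 + b2^2 + b3^2 = B := by
  obtain ⟨a, b, c, d, h⟩ := Nat.sum_four_squares B.toNat
  refine ⟨a, b, c, d, ?_⟩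
  have := congrArg (fun t : ℕ => (t : ℤ)) h
  push_cast at this
  rwa [Int.toNat_of_nonneg hB] at this

private lemma mem_S9 (n : ℕ) (T c a0 a1 a2 a3 B : ℤ) (hB : 0 ≤ B)
    (h1 : c + 2*(a0+a1+a2+a3) = T)
    (h2 : c^2 + 2*(a0^2+a1^2+a2^2+a3^2) + 2*B = (n:ℤ)) : T ∈ S 9 n := by
  obtain ⟨b0, b1, b2, b3, hb⟩ := four_sq_int B hB
  refine ⟨![c, a0+b0, a0-b0, a1+b1, a1-b1, a2+b2, a2-b2, a3+b3, a3-b3], ?_, ?_⟩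
  · simp [Fin.sum_univ_succ]
    linarith
  · simp [Fin.sum_univ_succ]
    linear_combination h2 + 2 * hb

private lemma mem_S10 (n : ℕ) (T c d a0 a1 a2 a3 B : ℤ) (hB : 0 ≤ B)
    (h1 : c + d + 2*(a0+a1+a2+a3) = T)
    (h2 : c^2 + d^2 + 2*(a0^2+a1^2+a2^2+a3^2) + 2*B = (n:ℤ)) : T ∈ S 10 n := by
  obtain ⟨b0, b1, b2, b3, hb⟩ := four_sq_int B hB
  refine ⟨![c, d, a0+b0, a0-b0, a1+b1, a1-b1, a2+b2, a2-b2, a3+b3, a3-b3], ?_, ?_⟩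
  · simp [Fin.sum_univ_succ]
    linarith
  · simp [Fin.sum_univ_succ]
    linear_combination h2 + 2 * hb

private lemma mem_S11 (n : ℕ) (T c d e a0 a1 a2 a3 B : ℤ) (hB : 0 ≤ B)
    (h1 : c + d + e + 2*(a0+a1+a2+a3) = T)
    (h2 : c^2 + d^2 + e^2 + 2*(a0^2+a1^2+a2^2+a3^2) + 2*B = (n:ℤ)) : T ∈ S 11 n := by
  obtain ⟨b0, b1, b2, b3, hb⟩ := four_sq_int B hB
  refine ⟨![c, d, e, a0+b0, a0-b0, a1+b1, a1-b1, a2+b2, a2-b2, a3+b3, a3-b3], ?_, ?_⟩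
  · simp [Fin.sum_univ_succ]
    linarith
  · simp [Fin.sum_univ_succ]
    linear_combination h2 + 2 * hb

private lemma sq_emod_two' (a : ℤ) : a ^ 2 % 2 = a % 2 := by
  obtain ⟨k, hk | hk⟩ := Int.even_or_odd' a <;> subst hk
  · have h1 : (2*k)^2 = 2*(2*k^2) + 0 := by ring
    rw [h1]; generalize (2*k^2 : ℤ) = X; omega
  · have h1 : (2*k+1)^2 = 2*(2*k^2+2*k) + 1 := by ring
    rw [h1]; generalize (2*k^2+2*k : ℤ) = X; omega

private lemma constr9 (n : ℕ) (T : ℤ) (hpar : T % 2 = (n:ℤ) % 2)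
    (hb : T^2 ≤ 9*((n:ℤ)-1)+1) : T ∈ S 9 n := by
  obtain ⟨q, r, hq, hr0, hr9⟩ : ∃ q r : ℤ, T = 9*q + r ∧ 0 ≤ r ∧ r < 9 :=
    ⟨T / 9, T % 9, (Int.mul_ediv_add_emod T 9).symm, Int.emod_nonneg T (by norm_num),
      Int.emod_lt_of_pos T (by norm_num)⟩
  have hodd : 1 ≤ (2*r-9)^2 := by
    rcases le_or_gt r 4 with h | h <;> nlinarith
  rw [hq] at hb hpar
  have h0 : 9*(9*q^2 + 2*(q*r) + r) ≤ 9*(n:ℤ) + 12 := by nlinarith [hb, hodd]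
  have key : ∃ B : ℤ, 0 ≤ B ∧ 9*q^2 + 2*(q*r) + r + 2*B = (n:ℤ) := by
    have hqq : q^2 % 2 = q % 2 := sq_emod_two' q
    obtain ⟨Q, hQ⟩ : ∃ Q, q^2 = Q := ⟨_, rfl⟩
    obtain ⟨W, hW⟩ : ∃ W, q*r = W := ⟨_, rfl⟩
    rw [hQ, hW] at h0 ⊢
    rw [hQ] at hqq
    refine ⟨((n:ℤ) - (9*Q + 2*W + r))/2, ?_, ?_⟩ <;> omega
  obtain ⟨B, hB0, hBeq⟩ := key
  interval_cases r
  · exact mem_S9 n T q q q q q B hB0 (by omega) (by linear_combination hBeq)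
  · exact mem_S9 n T (q+1) q q q q B hB0 (by omega) (by linear_combination hBeq)
  · exact mem_S9 n T q (q+1) q q q B hB0 (by omega) (by linear_combination hBeq)
  · exact mem_S9 n T (q+1) (q+1) q q q B hB0 (by omega) (by linear_combination hBeq)
  · exact mem_S9 n T q (q+1) (q+1) q q B hB0 (by omega) (by linear_combination hBeq)
  · exact mem_S9 n T (q+1) (q+1) (q+1) q q B hB0 (by omega) (by linear_combination hBeq)
  · exact mem_S9 n T q (q+1) (q+1) (q+1) q B hB0 (by omega) (by linear_combination hBeq)
  · exact mem_S9 n T (q+1) (q+1) (q+1) (q+1) q B hB0 (by omega) (by linear_combination hBeq)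
  · exact mem_S9 n T q (q+1) (q+1) (q+1) (q+1) B hB0 (by omega) (by linear_combination hBeq)

private lemma constr10 (n : ℕ) (T : ℤ) (hpar : T % 2 = (n:ℤ) % 2)
    (hb : T^2 ≤ 10*((n:ℤ)-1)+1) : T ∈ S 10 n := by
  obtain ⟨q, r, hq, hr0, hr9⟩ : ∃ q r : ℤ, T = 10*q + r ∧ 0 ≤ r ∧ r < 10 :=
    ⟨T / 10, T % 10, (Int.mul_ediv_add_emod T 10).symm, Int.emod_nonneg T (by norm_num),
      Int.emod_lt_of_pos T (by norm_num)⟩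
  rw [hq] at hb hpar
  have h0 : 10*(10*q^2 + 2*(q*r) + r) ≤ 10*(n:ℤ) + 16 := by nlinarith [hb, sq_nonneg (r-5)]
  have key : ∃ B : ℤ, 0 ≤ B ∧ 10*q^2 + 2*(q*r) + r + 2*B = (n:ℤ) := by
    have hqq : q^2 % 2 = q % 2 := sq_emod_two' q
    obtain ⟨Q, hQ⟩ : ∃ Q, q^2 = Q := ⟨_, rfl⟩
    obtain ⟨W, hW⟩ : ∃ W, q*r = W := ⟨_, rfl⟩
    rw [hQ, hW] at h0 ⊢
    rw [hQ] at hqq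
    refine ⟨((n:ℤ) - (10*Q + 2*W + r))/2, ?_, ?_⟩ <;> omega
  obtain ⟨B, hB0, hBeq⟩ := key
  interval_cases r
  · exact mem_S10 n T q q q q q q B hB0 (by omega) (by linear_combination hBeq)
  · exact mem_S10 n T (q+1) q q q q q B hB0 (by omega) (by linear_combination hBeq)
  · exact mem_S10 n T q q (q+1) q q q B hB0 (by omega) (by linear_combination hBeq)
  · exact mem_S10 n T (q+1) q (q+1) q q q B hB0 (by omega) (by linear_combination hBeq)
  · exact mem_S10 n T q q (q+1) (q+1) q q B hB0 (by omega) (by linear_combination hBeq)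
  · exact mem_S10 n T (q+1) q (q+1) (q+1) q q B hB0 (by omega) (by linear_combination hBeq)
  · exact mem_S10 n T q q (q+1) (q+1) (q+1) q B hB0 (by omega) (by linear_combination hBeq)
  · exact mem_S10 n T (q+1) q (q+1) (q+1) (q+1) q B hB0 (by omega) (by linear_combination hBeq)
  · exact mem_S10 n T q q (q+1) (q+1) (q+1) (q+1) B hB0 (by omega) (by linear_combination hBeq)
  · exact mem_S10 n T (q+1) q (q+1) (q+1) (q+1) (q+1) B hB0 (by omega) (by linear_combination hBeq)

private lemma constr11 (n : ℕ) (T : ℤ) (hpar : T % 2 = (n:ℤ) % 2)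
    (hb : T^2 ≤ 11*((n:ℤ)-1)+1) : T ∈ S 11 n := by
  obtain ⟨q, r, hq, hr0, hr9⟩ : ∃ q r : ℤ, T = 11*q + r ∧ 0 ≤ r ∧ r < 11 :=
    ⟨T / 11, T % 11, (Int.mul_ediv_add_emod T 11).symm, Int.emod_nonneg T (by norm_num),
      Int.emod_lt_of_pos T (by norm_num)⟩
  have hodd : 1 ≤ (2*r-11)^2 := by
    rcases le_or_gt r 5 with h | h <;> nlinarith
  rw [hq] at hb hpar
  have h0 : 11*(11*q^2 + 2*(q*r) + r) ≤ 11*(n:ℤ) + 20 := by nlinarith [hb, hodd]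
  have key : ∃ B : ℤ, 0 ≤ B ∧ 11*q^2 + 2*(q*r) + r + 2*B = (n:ℤ) := by
    have hqq : q^2 % 2 = q % 2 := sq_emod_two' q
    obtain ⟨Q, hQ⟩ : ∃ Q, q^2 = Q := ⟨_, rfl⟩
    obtain ⟨W, hW⟩ : ∃ W, q*r = W := ⟨_, rfl⟩
    rw [hQ, hW] at h0 ⊢
    rw [hQ] at hqq
    refine ⟨((n:ℤ) - (11*Q + 2*W + r))/2, ?_, ?_⟩ <;> omega
  obtain ⟨B, hB0, hBeq⟩ := key
  interval_cases r
  · exact mem_S11 n T q q q q q q q B hB0 (by omega) (by linear_combination hBeq)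
  · exact mem_S11 n T (q+1) q q q q q q B hB0 (by omega) (by linear_combination hBeq)
  · exact mem_S11 n T q q q (q+1) q q q B hB0 (by omega) (by linear_combination hBeq)
  · exact mem_S11 n T (q+1) q q (q+1) q q q B hB0 (by omega) (by linear_combination hBeq)
  · exact mem_S11 n T q q q (q+1) (q+1) q q B hB0 (by omega) (by linear_combination hBeq)
  · exact mem_S11 n T (q+1) q q (q+1) (q+1) q q B hB0 (by omega) (by linear_combination hBeq)
  · exact mem_S11 n T q q q (q+1) (q+1) (q+1) q B hB0 (by omega) (by linear_combination hBeq)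
  · exact mem_S11 n T (q+1) q q (q+1) (q+1) (q+1) q B hB0 (by omega) (by linear_combination hBeq)
  · exact mem_S11 n T q q q (q+1) (q+1) (q+1) (q+1) B hB0 (by omega) (by linear_combination hBeq)
  · exact mem_S11 n T (q+1) q q (q+1) (q+1) (q+1) (q+1) B hB0 (by omega) (by linear_combination hBeq)
  · exact mem_S11 n T (q+1) (q+1) q (q+1) (q+1) (q+1) (q+1) B hB0 (by omega) (by linear_combination hBeq)
private lemma sum_sq_parity {m : ℕ} (x : Fin m → ℤ) :
    (∑ i, (x i) ^ 2) % 2 = (∑ i, x i) % 2 := by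
  rw [Finset.sum_int_mod, Finset.sum_int_mod (f := x)]
  congr 1
  exact Finset.sum_congr rfl fun i _ => sq_emod_two' (x i)

theorem stmt16 (m : ℕ) (hm : m = 9 ∨ m = 10 ∨ m = 11) (n : ℕ) (hn : m < n) :
    {T : ℤ | T ∈ S m n ∧ T ^ 2 < (m : ℤ) * n} =
      {T : ℤ | T ^ 2 ≤ (m : ℤ) * ((n : ℤ) - 1) + 1 ∧ T % 2 = (n : ℤ) % 2} := by
  ext T
  simp only [Set.mem_setOf_eq]
  have hm2 : 2 ≤ m := by rcases hm with h | h | h <;> omega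
  constructor
  · rintro ⟨⟨x, hsum, hsq⟩, hlt⟩
    refine ⟨forward_bound m n hm2 x T hsum hsq hlt, ?_⟩
    calc T % 2 = (∑ i, x i) % 2 := by rw [hsum]
      _ = (∑ i, (x i) ^ 2) % 2 := (sum_sq_parity x).symm
      _ = (n : ℤ) % 2 := by rw [hsq]
  · rintro ⟨hble, hpar⟩
    have h9 : (9 : ℤ) ≤ (m : ℤ) := by
      exact_mod_cast (by omega : 9 ≤ m)
    have hlt : T ^ 2 < (m : ℤ) * n := by nlinarith [hble, h9]
    refine ⟨?_, hlt⟩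
    rcases hm with h | h | h <;> subst h
    · exact constr9 n T hpar (by push_cast at hble ⊢; linarith)
    · exact constr10 n T hpar (by push_cast at hble ⊢; linarith)
    · exact constr11 n T hpar (by push_cast at hble ⊢; linarith)
end
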